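/- arXiv:2405.17917 — 11 statements merged into one kernel-verified Lean document; each statement's English description precedes it below -/
import Mathlib

section
/- Let N, K be natural numbers with 1 ≤ K ≤ N and let 𝒯 = (t_1, …, t_T) be a testing design on Fin N. Then 𝒯 is feasible for (N, K) if and only if for every subset S ⊆ Fin N with |S| = K and every v ∈ S there exists an index i ∈ {1,…,T} such that the outcome of t_i on S equals some v (equivalently, v occurs in t_i and appears in t_i before every other element of S). -/
/-- The outcome of a cascaded test `t` (a list of items) on a defective set `S`:
the first element of `t` belonging to `S`, or `none` if there is none. -/
def outcome {N : ℕ} (t : List (Fin N)) (S : Finset (Fin N)) : Option (Fin N) :=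
  (t.filter (fun x => x ∈ S)).head?

/-- A testing design `𝒯` (an indexed family of tests) is feasible for `(N, K)` if the
map sending each `S ⊆ Fin N` with `|S| ≤ K` to its vector of test outcomes is injective
on `{S | |S| ≤ K}`. -/
def Feasible (N K : ℕ) {T : ℕ} (𝒯 : Fin T → List (Fin N)) : Prop :=
  Set.InjOn (fun (S : Finset (Fin N)) => fun i : Fin T => outcome (𝒯 i) S)
    {S : Finset (Fin N) | S.card ≤ K}

/-- `TNK N K`: the minimum number of tests over all duplicate-free testing designs
feasible for `(N, K)`. -/
noncomputable def TNK (N K : ℕ) : ℕ :=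
  sInf {T : ℕ | ∃ 𝒯 : Fin T → List (Fin N), (∀ i, (𝒯 i).Nodup) ∧ Feasible N K 𝒯}

/-- `fT 𝒯 S v`: the number of tests in the design `𝒯` whose outcome on `S` is `some v`. -/
def fT {N T : ℕ} (𝒯 : Fin T → List (Fin N)) (S : Finset (Fin N)) (v : Fin N) : ℕ :=
  (Finset.univ.filter (fun i : Fin T => outcome (𝒯 i) S = some v)).card

/-- A design is in systematic form if every test is nonempty and the first element of
each test does not occur in any other test. -/
def Systematic {N T : ℕ} (𝒯 : Fin T → List (Fin N)) : Prop :=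
  ∀ i : Fin T, 𝒯 i ≠ [] ∧ ∀ u : Fin N, (𝒯 i).head? = some u → ∀ j : Fin T, j ≠ i → u ∉ 𝒯 j

section Outcome

variable {N : ℕ} {t : List (Fin N)} {S S' : Finset (Fin N)} {v : Fin N}

lemma mem_of_outcome_eq_some (h : outcome t S = some v) : v ∈ S :=
  of_decide_eq_true (List.mem_filter.mp (List.mem_of_mem_head? h)).2

lemma outcome_erase_of_ne (h : outcome t S ≠ some v) : outcome t (S.erase v) = outcome t S := by
  induction t with
  | nil => rfl
  | cons x t ih =>
    by_cases hxS : x ∈ S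
    · have hxv : x ≠ v := by rintro rfl; simp [outcome, hxS] at h
      simp [outcome, hxS, hxv]
    · simp_all [outcome]

lemma outcome_eq_some_of_subset (hSS' : S ⊆ S') (hv : v ∈ S) (h : outcome t S' = some v) :
    outcome t S = some v := by
  induction t with
  | nil => simp [outcome] at h
  | cons x t ih =>
    by_cases hxS' : x ∈ S'
    · obtain rfl : x = v := by simpa [outcome, hxS'] using h
      simp [outcome, hv]
    · have hxS : x ∉ S := fun hx => hxS' (hSS' hx)
      simp_all [outcome]

end Outcome

section Design

variable {N K T : ℕ} {𝒯 : Fin T → List (Fin N)} {S S' : Finset (Fin N)}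

/-- Removing `v` from `S` changes no outcome unless some test has outcome `v`. -/
lemma Feasible.exists_outcome_eq_some (hF : Feasible N K 𝒯) (hS : S.card ≤ K) {v : Fin N}
    (hv : v ∈ S) : ∃ i, outcome (𝒯 i) S = some v := by
  by_contra! h
  have hsame : (fun i => outcome (𝒯 i) (S.erase v)) = fun i => outcome (𝒯 i) S :=
    funext fun i => outcome_erase_of_ne (h i)
  have hS' : (S.erase v).card ≤ K := Finset.card_erase_le.trans hS
  exact Finset.notMem_erase v S (by rwa [hF hS' hS hsame])

/-- Each `v ∈ S` lies in a `K`-set `A ⊇ S`; a test with outcome `v` on `A` also has outcome `v`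
on `S`, hence on `S'`. -/
lemma subset_of_outcome_eq (hKN : K ≤ N)
    (hid : ∀ A : Finset (Fin N), A.card = K → ∀ v ∈ A, ∃ i, outcome (𝒯 i) A = some v)
    (hS : S.card ≤ K) (heq : ∀ i, outcome (𝒯 i) S = outcome (𝒯 i) S') : S ⊆ S' := by
  intro v hv
  obtain ⟨A, hSA, hA⟩ := Finset.exists_superset_card_eq hS (by simpa using hKN)
  obtain ⟨i, hi⟩ := hid A hA v (hSA hv)
  exact mem_of_outcome_eq_some (heq i ▸ outcome_eq_some_of_subset hSA hv hi)

end Design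

theorem stmt0_general (N K : ℕ) (hKN : K ≤ N)
    (T : ℕ) (𝒯 : Fin T → List (Fin N)) :
    Feasible N K 𝒯 ↔
      ∀ S : Finset (Fin N), S.card = K → ∀ v ∈ S,
        ∃ i : Fin T, outcome (𝒯 i) S = some v := by
  refine ⟨fun hF S hS v hv => hF.exists_outcome_eq_some hS.le hv, fun hid S hS S' hS' heq => ?_⟩
  exact (subset_of_outcome_eq hKN hid hS (congrFun heq)).antisymm
    (subset_of_outcome_eq hKN hid hS' fun i => (congrFun heq i).symm)

theorem stmt0 (N K : ℕ) (hK : 1 ≤ K) (hKN : K ≤ N)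
    (T : ℕ) (𝒯 : Fin T → List (Fin N)) (hnd : ∀ i, (𝒯 i).Nodup) :
    Feasible N K 𝒯 ↔
      ∀ S : Finset (Fin N), S.card = K → ∀ v ∈ S,
        ∃ i : Fin T, outcome (𝒯 i) S = some v :=
  stmt0_general N K hKN T 𝒯
end

section
/- Let N, K be natural numbers with 1 ≤ K ≤ N and let 𝒯 = (t_1, …, t_T) be a testing design feasible for (N, K). Then for every subset S ⊆ Fin N with |S| ≤ K, one has S = {v ∈ Fin N : ∃ i ∈ {1,…,T}, the outcome of t_i on S equals some v}; that is, the defective set is exactly the set of non-null test outcomes. -/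
lemma outcome_erase {N : ℕ} (t : List (Fin N)) (S : Finset (Fin N)) (v : Fin N)
    (h : outcome t S ≠ some v) : outcome t (S.erase v) = outcome t S := by
  induction t with
  | nil => rfl
  | cons a t' ih =>
    by_cases ha : a ∈ S
    · have hav : a ≠ v := by
        intro hv; subst hv
        apply h
        simp [outcome, ha]
      simp [outcome, ha, Finset.mem_erase, hav]
    · have ha' : a ∉ S.erase v := fun hx => ha (Finset.mem_of_mem_erase hx)
      have h' : outcome t' S ≠ some v := by
        simpa [outcome, ha] using h
      simpa [outcome, ha, ha'] using ih h'

theorem stmt1 (N K : ℕ) (hK : 1 ≤ K) (hKN : K ≤ N)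
    (T : ℕ) (𝒯 : Fin T → List (Fin N)) (hnd : ∀ i, (𝒯 i).Nodup)
    (hF : Feasible N K 𝒯) :
    ∀ S : Finset (Fin N), S.card ≤ K →
      ∀ v : Fin N, v ∈ S ↔ ∃ i : Fin T, outcome (𝒯 i) S = some v := by
  intro S hS v
  constructor
  · intro hv
    by_contra hno
    push_neg at hno
    have heq : (fun i : Fin T => outcome (𝒯 i) (S.erase v)) = fun i => outcome (𝒯 i) S := by
      funext i; exact outcome_erase _ _ _ (hno i)
    have hcard : (S.erase v).card ≤ K := le_trans (Finset.card_erase_le) hS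
    have := hF hcard hS heq
    rw [← this] at hv
    exact (Finset.notMem_erase v S) hv
  · rintro ⟨i, hi⟩
    have : v ∈ (𝒯 i).filter (fun x => x ∈ S) := by
      have := List.head?_eq_head (l := (𝒯 i).filter (fun x => x ∈ S))
      rcases hh : (𝒯 i).filter (fun x => x ∈ S) with _ | ⟨a, l⟩
      · simp [outcome, hh] at hi
      · simp only [outcome, hh, List.head?_cons, Option.some.injEq] at hi
        subst hi; simp [hh]
    have := List.of_mem_filter this
    simpa using this
end

section
/- Let 𝒯 = (t_1, …, t_T) be a testing design feasible for (N, K), and let l ∈ {1,…,T} be an index with t_l nonempty; let u be the first element of t_l. Define t̂_i to be the list t_i with all occurrences of u deleted, for every i ≠ l, and t̂_l = t_l. Then the design 𝒯̂ = (t̂_1, …, t̂_T) is feasible for (N, K). -/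
lemma outcome_cons {N : ℕ} (a : Fin N) (t : List (Fin N)) (S : Finset (Fin N)) :
    outcome (a :: t) S = if a ∈ S then some a else outcome t S := by
  simp only [outcome, List.filter_cons]
  split <;> simp_all

lemma outcome_mem {N : ℕ} {t : List (Fin N)} {S : Finset (Fin N)} {w : Fin N}
    (h : outcome t S = some w) : w ∈ S := by
  induction t with
  | nil => simp [outcome] at h
  | cons a t ih =>
    rw [outcome_cons] at h
    split at h
    · cases h; assumption
    · exact ih h

lemma filter_ne_of_not_mem {N : ℕ} {t : List (Fin N)} {u : Fin N} (h : u ∉ t) :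
    t.filter (fun x => x ≠ u) = t := by
  apply List.filter_eq_self.mpr
  intro a ha
  simp only [ne_eq, decide_eq_true_eq]
  rintro rfl; exact h ha

lemma key_lemma {N : ℕ} (u : Fin N) (t : List (Fin N)) (hnd : t.Nodup)
    (S₁ S₂ : Finset (Fin N)) (hiff : u ∈ S₁ ↔ u ∈ S₂)
    (h : outcome (t.filter (fun x => x ≠ u)) S₁ = outcome (t.filter (fun x => x ≠ u)) S₂) :
    outcome t S₁ = outcome t S₂ := by
  induction t with
  | nil => rfl
  | cons a t ih =>
    have hnd' : t.Nodup := hnd.of_cons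
    by_cases hau : a = u
    · subst hau
      have hnm : a ∉ t := (List.nodup_cons.mp hnd).1
      rw [List.filter_cons, filter_ne_of_not_mem hnm] at h
      simp at h
      rw [outcome_cons, outcome_cons]
      by_cases h1 : a ∈ S₁
      · rw [if_pos h1, if_pos (hiff.mp h1)]
      · rw [if_neg h1, if_neg (fun h2 => h1 (hiff.mpr h2))]
        exact h
    · rw [List.filter_cons] at h
      simp [hau] at h
      rw [outcome_cons, outcome_cons] at h
      rw [outcome_cons, outcome_cons]
      by_cases h1 : a ∈ S₁ <;> by_cases h2 : a ∈ S₂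
      · rw [if_pos h1, if_pos h2]
      · rw [if_pos h1, if_neg h2] at h
        exact absurd (outcome_mem h.symm) h2
      · rw [if_neg h1, if_pos h2] at h
        exact absurd (outcome_mem h) h1
      · rw [if_neg h1, if_neg h2] at h ⊢
        exact ih hnd' (by simpa using h)

theorem stmt3 (N K T : ℕ) (𝒯 : Fin T → List (Fin N)) (hnd : ∀ i, (𝒯 i).Nodup)
    (hF : Feasible N K 𝒯) (l : Fin T) (u : Fin N) (hu : (𝒯 l).head? = some u) :
    (∀ i, ((fun i => if i = l then 𝒯 l else (𝒯 i).filter (fun x => x ≠ u)) i).Nodup) ∧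
    Feasible N K (fun i => if i = l then 𝒯 l else (𝒯 i).filter (fun x => x ≠ u)) := by
  constructor
  · intro i
    by_cases hi : i = l
    · simp [hi, hnd l]
    · simp only [hi, if_false]
      exact (hnd i).filter _
  · intro S₁ hS₁ S₂ hS₂ h
    -- outcome of test l determines membership of u
    have hul : ∀ S : Finset (Fin N), (outcome (𝒯 l) S = some u ↔ u ∈ S) := by
      intro S
      constructor
      · exact outcome_mem
      · intro huS
        obtain ⟨t', ht'⟩ : ∃ t', 𝒯 l = u :: t' := by
          cases htl : 𝒯 l with
          | nil => rw [htl] at hu; simp at hu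
          | cons a t' =>
            rw [htl] at hu; simp at hu
            exact ⟨t', by rw [hu]⟩
        rw [ht', outcome_cons, if_pos huS]
    have hl : outcome (𝒯 l) S₁ = outcome (𝒯 l) S₂ := by
      have := congrFun h l
      simpa using this
    have hiff : u ∈ S₁ ↔ u ∈ S₂ := by
      rw [← hul S₁, ← hul S₂, hl]
    apply hF hS₁ hS₂
    funext i
    by_cases hi : i = l
    · subst hi; exact hl
    · have hi' := congrFun h i
      simp only [hi, if_false] at hi'
      exact key_lemma u (𝒯 i) (hnd i) S₁ S₂ hiff hi'
end

section
/- Let 𝒯₁ be a testing design feasible for (N, K). Then there exists a testing design 𝒯₂ that is feasible for (N, K), is in systematic form, and has at most as many tests as 𝒯₁ (|𝒯₂| ≤ |𝒯₁|). -/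
/-! Any feasible design becomes systematic after finitely many moves that keep it feasible and
decrease `T + ∑ |tᵢ|`: delete an empty test (its outcome is always `none`), and, when the head
`u` of a test `tᵢ` occurs in another test `tⱼ = a ++ u :: b`, delete that occurrence. The second
move loses nothing because `tᵢ` reveals whether `u ∈ S`, and if `u ∈ S` the outcome of `tⱼ` is
the outcome of `a ++ b` when that lies in `a`, and `u` otherwise. -/

theorem outcome_eq_find? {N : ℕ} (t : List (Fin N)) (S : Finset (Fin N)) :
    outcome t S = t.find? (· ∈ S) :=
  List.head?_filter

@[simp]
theorem outcome_nil {N : ℕ} (S : Finset (Fin N)) : outcome [] S = none :=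
  rfl

theorem outcome_eq_some_iff_of_head?_eq {N : ℕ} {t : List (Fin N)} {u : Fin N}
    (h : t.head? = some u) (S : Finset (Fin N)) : outcome t S = some u ↔ u ∈ S := by
  obtain ⟨l, rfl⟩ : ∃ l, t = u :: l := by
    cases t with
    | nil => simp at h
    | cons v l => exact ⟨l, by simpa using h⟩
  by_cases hu : u ∈ S
  · simp [outcome_eq_find?, hu]
  · simp only [outcome_eq_find?, List.find?_cons, hu, decide_false, iff_false]
    exact fun h' => hu (by simpa using List.find?_some h')

theorem List.find?_eq_filter_find?_append {α : Type*} [DecidableEq α] {p : α → Bool}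
    {a b : List α} (hab : a.Disjoint b) :
    a.find? p = ((a ++ b).find? p).filter (· ∈ a) := by
  rw [List.find?_append]
  cases ha : a.find? p with
  | some x => simp [Option.filter_some, List.mem_of_find?_eq_some ha]
  | none =>
    cases hb : b.find? p with
    | none => rfl
    | some y => simpa [Option.filter_some] using fun hy => hab hy (List.mem_of_find?_eq_some hb)

theorem outcome_append_cons {N : ℕ} {a b : List (Fin N)} (hab : a.Disjoint b) (u : Fin N)
    (S : Finset (Fin N)) :
    outcome (a ++ u :: b) S =
      if u ∈ S then ((outcome (a ++ b) S).filter (· ∈ a)).or (some u)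
      else outcome (a ++ b) S := by
  rw [outcome_eq_find?, outcome_eq_find?, ← List.find?_eq_filter_find?_append hab,
    List.find?_append, List.find?_cons]
  split_ifs with hu <;> simp [hu]

section

variable {N K T : ℕ}

theorem Feasible.of_outcomes_determine {T' : ℕ} {𝒯 : Fin T → List (Fin N)}
    {𝒯' : Fin T' → List (Fin N)} (hF : Feasible N K 𝒯)
    (h : ∀ S S', (∀ i, outcome (𝒯' i) S = outcome (𝒯' i) S') →
      ∀ i, outcome (𝒯 i) S = outcome (𝒯 i) S') :
    Feasible N K 𝒯' :=
  fun _ hS _ hS' hEq => hF hS hS' (funext (h _ _ (congrFun hEq)))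

theorem Feasible.comp_succAbove_of_eq_nil {𝒯 : Fin (T + 1) → List (Fin N)}
    (hF : Feasible N K 𝒯) {i : Fin (T + 1)} (hi : 𝒯 i = []) :
    Feasible N K (𝒯 ∘ i.succAbove) := by
  refine hF.of_outcomes_determine fun S S' h k => ?_
  rcases i.eq_self_or_eq_succAbove k with rfl | ⟨j, rfl⟩
  · simp [hi]
  · exact h j

theorem Feasible.update_append_of_head?_eq {𝒯 : Fin T → List (Fin N)} (hF : Feasible N K 𝒯)
    {i j : Fin T} (hji : j ≠ i) {u : Fin N} (hu : (𝒯 i).head? = some u)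
    {a b : List (Fin N)} (hj : 𝒯 j = a ++ u :: b) (hab : a.Disjoint b) :
    Feasible N K (Function.update 𝒯 j (a ++ b)) := by
  refine hF.of_outcomes_determine fun S S' h k => ?_
  have hk := h k
  rcases eq_or_ne k j with rfl | hkj
  · have huS : u ∈ S ↔ u ∈ S' := by
      have hi := h i
      rw [Function.update_of_ne hji.symm] at hi
      rw [← outcome_eq_some_iff_of_head?_eq hu, ← outcome_eq_some_iff_of_head?_eq hu, hi]
    rw [Function.update_self] at hk
    simp only [hj, outcome_append_cons hab, hk, huS]
  · rwa [Function.update_of_ne hkj] at hk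

def designSize (𝒯 : Fin T → List (Fin N)) : ℕ :=
  T + ∑ i, (𝒯 i).length

theorem exists_feasible_designSize_lt_of_not_systematic {𝒯 : Fin T → List (Fin N)}
    (hnd : ∀ i, (𝒯 i).Nodup) (hF : Feasible N K 𝒯) (hsys : ¬Systematic 𝒯) :
    ∃ T' ≤ T, ∃ 𝒯' : Fin T' → List (Fin N),
      (∀ i, (𝒯' i).Nodup) ∧ Feasible N K 𝒯' ∧ designSize 𝒯' < designSize 𝒯 := by
  simp only [Systematic, not_forall, not_and_or, not_not, exists_prop] at hsys
  obtain ⟨i, hi | ⟨u, hu, j, hji, huj⟩⟩ := hsys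
  · obtain _ | T := T
    · exact i.elim0
    refine ⟨T, T.le_succ, 𝒯 ∘ i.succAbove, fun k => hnd _, hF.comp_succAbove_of_eq_nil hi, ?_⟩
    rw [designSize, designSize, Fin.sum_univ_succAbove _ i, hi]
    simp
  · obtain ⟨a, b, hj⟩ := List.append_of_mem huj
    have hndj : (a ++ u :: b).Nodup := hj ▸ hnd j
    have hab : a.Disjoint b := List.disjoint_of_nodup_append (hndj.sublist (by simp))
    refine ⟨T, le_rfl, Function.update 𝒯 j (a ++ b), fun k => ?_,
      hF.update_append_of_head?_eq hji hu hj hab, ?_⟩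
    · rcases eq_or_ne k j with rfl | hkj
      · simpa using hndj.sublist (by simp)
      · simpa [Function.update_of_ne hkj] using hnd k
    · simp only [designSize, Function.apply_update (fun _ => List.length) 𝒯 j (a ++ b)]
      rw [Finset.sum_update_of_mem (Finset.mem_univ j),
        Finset.sum_eq_add_sum_sdiff_singleton_of_mem (Finset.mem_univ j), hj]
      simp

theorem Feasible.exists_systematic {𝒯 : Fin T → List (Fin N)}
    (hnd : ∀ i, (𝒯 i).Nodup) (hF : Feasible N K 𝒯) :
    ∃ T' ≤ T, ∃ 𝒯' : Fin T' → List (Fin N),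
      (∀ i, (𝒯' i).Nodup) ∧ Feasible N K 𝒯' ∧ Systematic 𝒯' := by
  induction h : designSize 𝒯 using Nat.strong_induction_on generalizing T with
  | _ n ih =>
  by_cases hsys : Systematic 𝒯
  · exact ⟨T, le_rfl, 𝒯, hnd, hF, hsys⟩
  obtain ⟨T', hT', 𝒯', hnd', hF', hlt⟩ :=
    exists_feasible_designSize_lt_of_not_systematic hnd hF hsys
  obtain ⟨T'', hT'', rest⟩ := ih _ (h ▸ hlt) hnd' hF' rfl
  exact ⟨T'', hT''.trans hT', rest⟩

end

theorem stmt4 (N K : ℕ) (T₁ : ℕ) (𝒯₁ : Fin T₁ → List (Fin N))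
    (hnd₁ : ∀ i, (𝒯₁ i).Nodup) (hF₁ : Feasible N K 𝒯₁) :
    ∃ T₂ : ℕ, T₂ ≤ T₁ ∧ ∃ 𝒯₂ : Fin T₂ → List (Fin N),
      (∀ i, (𝒯₂ i).Nodup) ∧ Feasible N K 𝒯₂ ∧ Systematic 𝒯₂ :=
  hF₁.exists_systematic hnd₁
end

section
/- Let N, K be natural numbers with K ≥ 1. If N ≥ ⌊(K+1)/2⌋·(⌈(K+1)/2⌉ + 1) − 1, then every testing design feasible for (N, K) has at least ⌊(K+1)/2⌋·⌈(K+1)/2⌉ tests; that is, T(N, K) ≥ ⌊(K+1)/2⌋·⌈(K+1)/2⌉. -/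
lemma outcome_some_head {N : ℕ} [Inhabited (Fin N)] (l : List (Fin N)) (S : Finset (Fin N))
    (hne : l ≠ []) (hmem : l.headI ∈ S) : outcome l S = some l.headI := by
  cases l with
  | nil => exact absurd rfl hne
  | cons h r =>
    have hh : h ∈ S := hmem
    simp [outcome, List.filter_cons, hh]

lemma outcome_cons_of_notMem {N : ℕ} (h : Fin N) (r : List (Fin N)) (S : Finset (Fin N))
    (hh : h ∉ S) : outcome (h :: r) S = outcome r S := by
  simp [outcome, List.filter_cons, hh]

lemma outcome_congr {N : ℕ} (l : List (Fin N)) (S S' : Finset (Fin N))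
    (h : ∀ y ∈ l, (y ∈ S' ↔ y ∈ S)) : outcome l S' = outcome l S := by
  unfold outcome
  congr 1
  apply List.filter_congr
  intro y hy
  exact decide_eq_decide.mpr (h y hy)

lemma outcome_insert_of_blocked {N : ℕ} [Inhabited (Fin N)] (x z : Fin N)
    (X S : Finset (Fin N))
    (hxX : x ∈ X) (hXS : ∀ y ∈ X, y ≠ x → y ∈ S) :
    ∀ l : List (Fin N), (l.filter (fun y => y ∈ X)).head? = some z → z ≠ x →
      outcome l (insert x S) = outcome l S := by
  intro l
  induction l with
  | nil => simp
  | cons h r ih =>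
    intro hz hzx
    by_cases hS : h ∈ S
    · rw [outcome_some_head _ _ (by simp) (by simpa using Finset.mem_insert_of_mem hS),
          outcome_some_head _ _ (by simp) (by simpa using hS)]
    · by_cases hX : h ∈ X
      · exfalso
        rw [List.filter_cons, if_pos (by simp [hX])] at hz
        rw [List.head?_cons] at hz
        have hzh : h = z := Option.some.inj hz
        exact hS (hXS h hX (hzh ▸ hzx))
      · have hhx : h ≠ x := fun he => hX (he ▸ hxX)
        have hins : h ∉ insert x S := by
          simp [Finset.mem_insert, hhx, hS]
        rw [outcome_cons_of_notMem _ _ _ hins, outcome_cons_of_notMem _ _ _ hS]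
        rw [List.filter_cons, if_neg (by simp [hX])] at hz
        exact ih hz hzx

lemma lower_bound (N K : ℕ) (hK : 1 ≤ K)
    (hN : (K + 1) / 2 * ((K + 2) / 2 + 1) - 1 ≤ N)
    (T : ℕ) (𝒯 : Fin T → List (Fin N))
    (hfeas : Feasible N K 𝒯) : (K + 1) / 2 * ((K + 2) / 2) ≤ T := by
  classical
  by_contra hT
  push_neg at hT
  obtain ⟨a, ha_def⟩ : ∃ a : ℕ, (K + 1) / 2 = a := ⟨_, rfl⟩
  obtain ⟨b, hb_def⟩ : ∃ b : ℕ, (K + 2) / 2 = b := ⟨_, rfl⟩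
  rw [ha_def, hb_def] at hT hN
  have ha : 1 ≤ a := by omega
  have hb : 1 ≤ b := by omega
  have hab : a + b = K + 1 := by omega
  have habpos : 1 ≤ a * b := Nat.mul_pos ha hb
  have hN' : a * b + a - 1 ≤ N := by
    have hmul : a * (b + 1) = a * b + a := by ring
    omega
  have hN1 : 0 < N := by omega
  haveI : Inhabited (Fin N) := ⟨⟨0, hN1⟩⟩
  -- heads of all tests
  let Heads : Finset (Fin N) := Finset.image (fun i => (𝒯 i).headI) Finset.univ
  have hHeads : Heads.card ≤ T :=
    le_trans Finset.card_image_le (by simp)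
  have hrest : a ≤ (Finset.univ \ Heads).card := by
    rw [Finset.card_sdiff_of_subset (Finset.subset_univ _)]
    simp only [Finset.card_univ, Fintype.card_fin]
    omega
  obtain ⟨X, hXsub, hXcard⟩ := Finset.exists_subset_card_eq hrest
  -- F v : tests where v is the first element of X
  let F : Fin N → Finset (Fin T) := fun v =>
    Finset.univ.filter (fun i => ((𝒯 i).filter (fun y => y ∈ X)).head? = some v)
  have hdisj : ∀ u ∈ X, ∀ v ∈ X, u ≠ v → Disjoint (F u) (F v) := by
    intro u _ v _ huv
    refine Finset.disjoint_left.mpr ?_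
    intro i hiu hiv
    simp only [F, Finset.mem_filter] at hiu hiv
    have : some u = some v := hiu.2.symm.trans hiv.2
    exact huv (Option.some.inj this)
  have hsum : ∑ v ∈ X, (F v).card ≤ T := by
    rw [← Finset.card_biUnion hdisj]
    calc (X.biUnion F).card ≤ Finset.univ.card := Finset.card_le_card (Finset.subset_univ _)
      _ = T := by simp
  have hex : ∃ x ∈ X, (F x).card < b := by
    by_contra hc
    push_neg at hc
    have hge : a * b ≤ ∑ v ∈ X, (F v).card := by
      calc a * b = ∑ _v ∈ X, b := by rw [Finset.sum_const, hXcard, smul_eq_mul]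
        _ ≤ _ := Finset.sum_le_sum hc
    omega
  obtain ⟨x, hxX, hFx⟩ := hex
  let C : Finset (Fin N) := (F x).image (fun i => (𝒯 i).headI)
  have hC : C.card ≤ b - 1 := le_trans Finset.card_image_le (by omega)
  let S : Finset (Fin N) := (X.erase x) ∪ C
  have hxS : x ∉ S := by
    intro hx
    rcases Finset.mem_union.mp hx with h | h
    · exact (Finset.mem_erase.mp h).1 rfl
    · obtain ⟨i, _, hi⟩ := Finset.mem_image.mp h
      have hxH : x ∈ Heads := Finset.mem_image.mpr ⟨i, Finset.mem_univ i, hi⟩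
      have := Finset.mem_sdiff.mp (hXsub hxX)
      exact this.2 hxH
  have hXS' : ∀ y ∈ X, y ≠ x → y ∈ S :=
    fun y hy hyx => Finset.mem_union_left _ (Finset.mem_erase.mpr ⟨hyx, hy⟩)
  have hScard : S.card ≤ K - 1 := by
    have h1 : (X.erase x).card = a - 1 := by rw [Finset.card_erase_of_mem hxX, hXcard]
    have h2 : S.card ≤ (X.erase x).card + C.card := Finset.card_union_le _ _
    omega
  have hS'card : (insert x S).card ≤ K :=
    le_trans (Finset.card_insert_le _ _) (by omega)
  have hout : (fun i => outcome (𝒯 i) (insert x S)) = (fun i => outcome (𝒯 i) S) := by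
    funext i
    by_cases hxt : x ∈ 𝒯 i
    · by_cases hi : ((𝒯 i).filter (fun y => y ∈ X)).head? = some x
      · have hne : 𝒯 i ≠ [] := by
          intro h; rw [h] at hxt; simp at hxt
        have hiF : i ∈ F x := by
          simp only [F, Finset.mem_filter]
          exact ⟨Finset.mem_univ i, hi⟩
        have hhC : (𝒯 i).headI ∈ C := Finset.mem_image.mpr ⟨i, hiF, rfl⟩
        have hhS : (𝒯 i).headI ∈ S := Finset.mem_union_right _ hhC
        rw [outcome_some_head _ _ hne (Finset.mem_insert_of_mem hhS),
            outcome_some_head _ _ hne hhS]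
      · have hxf : x ∈ (𝒯 i).filter (fun y => y ∈ X) :=
          List.mem_filter.mpr ⟨hxt, by simpa using hxX⟩
        obtain ⟨z, hz⟩ : ∃ z, ((𝒯 i).filter (fun y => y ∈ X)).head? = some z := by
          cases h : ((𝒯 i).filter (fun y => y ∈ X)).head? with
          | none =>
            rw [List.head?_eq_none_iff] at h
            rw [h] at hxf; simp at hxf
          | some z => exact ⟨z, rfl⟩
        have hzx : z ≠ x := fun h => hi (h ▸ hz)
        exact outcome_insert_of_blocked x z X S hxX hXS' _ hz hzx
    · apply outcome_congr
      intro y hy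
      have hyx : y ≠ x := fun h => hxt (h ▸ hy)
      simp [Finset.mem_insert, hyx]
  have heq : insert x S = S := by
    apply hfeas (by simpa using hS'card) (by simp only [Set.mem_setOf_eq]; omega)
    exact hout
  exact hxS (heq ▸ Finset.mem_insert_self x S)

theorem stmt8 (N K : ℕ) (hK : 1 ≤ K)
    (hN : (K + 1) / 2 * ((K + 2) / 2 + 1) - 1 ≤ N) :
    (∀ (T : ℕ) (𝒯 : Fin T → List (Fin N)),
        (∀ i, (𝒯 i).Nodup) → Feasible N K 𝒯 → (K + 1) / 2 * ((K + 2) / 2) ≤ T) ∧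
    (K + 1) / 2 * ((K + 2) / 2) ≤ TNK N K := by
  constructor
  · intro T 𝒯 _ hfeas
    exact lower_bound N K hK hN T 𝒯 hfeas
  · have hne : {T : ℕ | ∃ 𝒯 : Fin T → List (Fin N),
        (∀ i, (𝒯 i).Nodup) ∧ Feasible N K 𝒯}.Nonempty := by
      refine ⟨N, fun v => [v], fun i => List.nodup_singleton _, ?_⟩
      intro S hS S' hS' h
      ext v
      have hv := congrFun h v
      by_cases h1 : v ∈ S <;> by_cases h2 : v ∈ S' <;>
        simp [outcome, List.filter_cons, h1, h2] at hv ⊢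
    obtain ⟨𝒯, _, hfe⟩ := Nat.sInf_mem hne
    exact lower_bound N K hK hN _ 𝒯 hfe
end

section
/- Let T be a natural number and let N ≥ 2^(2^T) + 1. For any permutations π_1, …, π_T of Fin N, there exist items a < b < c in Fin N such that for every i ∈ {1,…,T}, either a, b, c appear in π_i in this order (the position of a precedes that of b, which precedes that of c) or they appear in the reverse order c, b, a. -/
/-!
By Erdős–Szekeres, any function injective on more than `m * m` points is strictly monotone or
strictly antitone on more than `m` of them. Applying this once per permutation, each time inside
the set produced by the previous step, shrinks `2 ^ 2 ^ T + 1` items to more than two items on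
which every permutation is monotone or antitone; the three smallest of them work.
-/

open Finset

namespace ErdosSzekeres

variable {α β : Type*} [LinearOrder α] [LinearOrder β] (f : α → β) (s : Finset α)

def increasingBelow (x : α) : Finset (Finset α) :=
  {t ∈ s.powerset | StrictMonoOn f t ∧ ∀ y ∈ t, y < x ∧ f y < f x}

def incLength (x : α) : ℕ := (increasingBelow f s x).sup card

variable {f s}

lemma exists_mem_increasingBelow_card_eq (x : α) :
    ∃ t ∈ increasingBelow f s x, #t = incLength f s x := by
  obtain ⟨t, ht, heq⟩ := exists_mem_eq_sup (increasingBelow f s x)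
    ⟨∅, by simp [increasingBelow, StrictMonoOn]⟩ card
  exact ⟨t, ht, heq.symm⟩

lemma insert_subset_strictMonoOn_card_of_mem_increasingBelow {x : α} {t : Finset α}
    (hx : x ∈ s) (ht : t ∈ increasingBelow f s x) :
    insert x t ⊆ s ∧ StrictMonoOn f (insert x t : Finset α) ∧ #(insert x t) = #t + 1 := by
  simp only [increasingBelow, mem_filter, mem_powerset] at ht
  obtain ⟨hts, hmono, hbelow⟩ := ht
  refine ⟨insert_subset hx hts, ?_, card_insert_of_notMem fun hxt => (hbelow x hxt).1.false⟩
  rw [coe_insert, strictMonoOn_insert_iff_of_forall_le fun y hy => (hbelow y hy).1.le]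
  exact ⟨fun y hy _ => (hbelow y hy).2, hmono⟩

lemma exists_strictMonoOn_card_eq_incLength_add_one {x : α} (hx : x ∈ s) :
    ∃ t ⊆ s, StrictMonoOn f t ∧ #t = incLength f s x + 1 := by
  obtain ⟨t, ht, hcard⟩ := exists_mem_increasingBelow_card_eq (f := f) (s := s) x
  obtain ⟨hsub, hmono, hcard'⟩ := insert_subset_strictMonoOn_card_of_mem_increasingBelow hx ht
  exact ⟨insert x t, hsub, hmono, by rw [hcard', hcard]⟩

lemma incLength_lt_incLength {x y : α} (hx : x ∈ s) (hxy : x < y) (hfxy : f x < f y) :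
    incLength f s x < incLength f s y := by
  obtain ⟨t, ht, hcard⟩ := exists_mem_increasingBelow_card_eq (f := f) (s := s) x
  obtain ⟨hsub, hmono, hcard'⟩ := insert_subset_strictMonoOn_card_of_mem_increasingBelow hx ht
  have hbelow : ∀ z ∈ t, z < x ∧ f z < f x := (mem_filter.1 ht).2.2
  have hinsert : insert x t ∈ increasingBelow f s y := by
    refine mem_filter.2 ⟨mem_powerset.2 hsub, hmono, ?_⟩
    simp only [mem_insert, forall_eq_or_imp]
    exact ⟨⟨hxy, hfxy⟩,
      fun z hz => ⟨(hbelow z hz).1.trans hxy, (hbelow z hz).2.trans hfxy⟩⟩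
  calc incLength f s x < #(insert x t) := by omega
    _ ≤ incLength f s y := le_sup hinsert

/-- Erdős–Szekeres: labelling each point by `incLength`, a label `≥ r` yields a long increasing
subset, while each level set of the labelling is decreasing, so one of them is long. -/
theorem exists_strictMonoOn_or_strictAntiOn (hf : Set.InjOn f s) {r q : ℕ} (hs : r * q < #s) :
    (∃ t ⊆ s, r < #t ∧ StrictMonoOn f t) ∨ ∃ t ⊆ s, q < #t ∧ StrictAntiOn f t := by
  by_cases hlong : ∃ x ∈ s, r ≤ incLength f s x
  · obtain ⟨x, hx, hr⟩ := hlong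
    obtain ⟨t, hts, hmono, hcard⟩ := exists_strictMonoOn_card_eq_incLength_add_one (f := f) hx
    exact Or.inl ⟨t, hts, by omega, hmono⟩
  push Not at hlong
  obtain ⟨k, -, hk⟩ := exists_lt_card_fiber_of_mul_lt_card_of_maps_to
    (fun x hx => mem_range.2 (hlong x hx)) (by rwa [card_range])
  refine Or.inr ⟨{x ∈ s | incLength f s x = k}, filter_subset _ _, hk, ?_⟩
  intro x hx y hy hxy
  simp only [mem_coe, mem_filter] at hx hy
  have hle : f y ≤ f x := not_lt.1 fun hlt =>
    (incLength_lt_incLength hx.1 hxy hlt).ne (hx.2.trans hy.2.symm)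
  exact hle.lt_of_ne fun heq => hxy.ne (hf hx.1 hy.1 heq.symm)

theorem exists_subset_forall_strictMonoOn_or_strictAntiOn {ι : Type*} {g : ι → α → β}
    {m : ℕ} {I : Finset ι} (hinj : ∀ i ∈ I, Set.InjOn (g i) s) (hs : m ^ 2 ^ #I < #s) :
    ∃ t ⊆ s, m < #t ∧ ∀ i ∈ I, StrictMonoOn (g i) t ∨ StrictAntiOn (g i) t := by
  induction I using Finset.cons_induction generalizing s with
  | empty => exact ⟨s, subset_rfl, by simpa using hs, by simp⟩
  | cons a I haI ih =>
    rw [card_cons, pow_succ, pow_mul, sq] at hs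
    obtain ⟨t, hts, ht, hmono⟩ : ∃ t ⊆ s, m ^ 2 ^ #I < #t ∧
        (StrictMonoOn (g a) t ∨ StrictAntiOn (g a) t) := by
      rcases exists_strictMonoOn_or_strictAntiOn (hinj a (mem_cons_self a I)) hs with
        ⟨t, hts, ht, h⟩ | ⟨t, hts, ht, h⟩
      exacts [⟨t, hts, ht, .inl h⟩, ⟨t, hts, ht, .inr h⟩]
    obtain ⟨u, hut, hu, hI⟩ :=
      ih (fun i hi => (hinj i (mem_cons_of_mem hi)).mono (coe_subset.2 hts)) ht
    refine ⟨u, hut.trans hts, hu, ?_⟩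
    simp only [mem_cons, forall_eq_or_imp]
    exact ⟨hmono.imp (·.mono (coe_subset.2 hut)) (·.mono (coe_subset.2 hut)), hI⟩

end ErdosSzekeres

lemma Finset.exists_lt_lt_of_two_lt_card {α : Type*} [LinearOrder α] {s : Finset α}
    (hs : 2 < #s) : ∃ a ∈ s, ∃ b ∈ s, ∃ c ∈ s, a < b ∧ b < c := by
  let e := s.orderEmbOfFin rfl
  exact ⟨e ⟨0, by omega⟩, s.orderEmbOfFin_mem rfl _, e ⟨1, hs.trans' (by norm_num)⟩,
    s.orderEmbOfFin_mem rfl _, e ⟨2, hs⟩, s.orderEmbOfFin_mem rfl _,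
    e.strictMono (by simp [Fin.lt_def]), e.strictMono (by simp [Fin.lt_def])⟩

theorem stmt13 (T N : ℕ) (hN : 2 ^ 2 ^ T + 1 ≤ N)
    (π : Fin T → Equiv.Perm (Fin N)) :
    ∃ a b c : Fin N, a < b ∧ b < c ∧
      ∀ i : Fin T,
        ((π i)⁻¹ a < (π i)⁻¹ b ∧ (π i)⁻¹ b < (π i)⁻¹ c) ∨
        ((π i)⁻¹ c < (π i)⁻¹ b ∧ (π i)⁻¹ b < (π i)⁻¹ a) := by
  obtain ⟨t, -, ht, hmono⟩ := ErdosSzekeres.exists_subset_forall_strictMonoOn_or_strictAntiOn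
    (g := fun i => ⇑(π i)⁻¹) (m := 2) (s := univ) (I := univ)
    (fun i _ => (π i)⁻¹.injective.injOn)
    (by rwa [card_univ, card_univ, Fintype.card_fin, Fintype.card_fin, Nat.lt_iff_add_one_le])
  obtain ⟨a, ha, b, hb, c, hc, hab, hbc⟩ := exists_lt_lt_of_two_lt_card ht
  refine ⟨a, b, c, hab, hbc, fun i => ?_⟩
  rcases hmono i (mem_univ i) with h | h
  · exact .inl ⟨h ha hb hab, h hb hc hbc⟩
  · exact .inr ⟨h hb hc hbc, h ha hb hab⟩
end

section
/- Let K ≥ 3 and n ≥ K. Suppose there exists a testing design 𝒯₁ feasible for (n, K) in which every test is a permutation of Fin n (a duplicate-free list containing every element of Fin n), and a testing design 𝒢₁ feasible for (n, K−1) in which every test is a permutation of Fin n. Then there exists a testing design feasible for (n², K) with at most |𝒯₁| + |𝒢₁|² tests, in which every test is a permutation of Fin n². -/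
def pout {α : Type*} [DecidableEq α] (t : List α) (S : Finset α) : Option α :=
  (t.filter (fun x => x ∈ S)).head?

theorem pout_eq_outcome {N : ℕ} (t : List (Fin N)) (S : Finset (Fin N)) :
    (t.filter (fun x => x ∈ S)).head? = pout t S := rfl

@[simp] theorem pout_nil {α : Type*} [DecidableEq α] (S : Finset α) : pout ([] : List α) S = none := rfl

theorem pout_cons {α : Type*} [DecidableEq α] (a : α) (t : List α) (S : Finset α) :
    pout (a :: t) S = if a ∈ S then some a else pout t S := by
  by_cases h : a ∈ S <;> simp [pout, List.filter_cons, h]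

theorem pout_eq_none_iff {α : Type*} [DecidableEq α] (t : List α) (S : Finset α) :
    pout t S = none ↔ ∀ x ∈ t, x ∉ S := by
  simp [pout, List.head?_eq_none_iff, List.filter_eq_nil_iff]

theorem pout_mem {α : Type*} [DecidableEq α] {t : List α} {S : Finset α} {x : α}
    (h : pout t S = some x) : x ∈ S := by
  have := List.mem_of_mem_head? (l := t.filter (fun x => x ∈ S)) (a := x) (by rw [pout] at h; simp [h])
  simpa using (List.mem_filter.1 this).2

theorem pout_isSome {α : Type*} [DecidableEq α] {t : List α} {S : Finset α}
    (ht : ∀ x, x ∈ t) (hS : S.Nonempty) : ∃ x, pout t S = some x := by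
  rcases hS with ⟨y, hy⟩
  cases h : pout t S with
  | none => exact absurd hy ((pout_eq_none_iff t S).1 h y (ht y))
  | some x => exact ⟨x, rfl⟩

theorem pout_singleton {α : Type*} [DecidableEq α] {t : List α} {a : α} (ha : a ∈ t) :
    pout t {a} = some a := by
  cases h : pout t {a} with
  | none => exact absurd ((pout_eq_none_iff t {a}).1 h a ha) (by simp)
  | some x => have := pout_mem h; simp_all

theorem pout_erase {α : Type*} [DecidableEq α] {t : List α} {S : Finset α} {b : α}
    (h : pout t S ≠ some b) : pout t (S.erase b) = pout t S := by
  induction t with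
  | nil => rfl
  | cons a t ih =>
    rw [pout_cons] at h ⊢
    rw [pout_cons]
    by_cases ha : a ∈ S
    · have hab : a ≠ b := by simp [ha] at h; rintro rfl; exact h rfl
      simp [ha, Finset.mem_erase, hab]
    · have : a ∉ S.erase b := fun hc => ha (Finset.mem_of_mem_erase hc)
      simp only [ha, if_false, this, if_false] at h ⊢
      exact ih h

theorem pout_map_equiv {α β : Type*} [DecidableEq α] [DecidableEq β] (e : α ≃ β)
    (t : List α) (S : Finset α) :
    pout (t.map e) (S.image e) = Option.map e (pout t S) := by
  rw [pout, pout, List.filter_map, List.head?_map]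
  congr 2
  apply List.filter_congr
  intro x _
  simp [Function.comp, Finset.mem_image, e.injective.eq_iff]

theorem pout_append {α : Type*} [DecidableEq α] (l₁ l₂ : List α) (S : Finset α) :
    pout (l₁ ++ l₂) S = (pout l₁ S).or (pout l₂ S) := by
  rw [pout, List.filter_append, List.head?_append]; rfl

/-- fiber of `P` over second coordinate `b` -/
def fib {α β : Type*} [DecidableEq α] [DecidableEq β] (P : Finset (α × β)) (b : β) : Finset α :=
  (P.filter (fun p => p.2 = b)).image Prod.fst

theorem mem_fib {α β : Type*} [DecidableEq α] [DecidableEq β] (P : Finset (α × β)) (a : α) (b : β) :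
    a ∈ fib P b ↔ (a, b) ∈ P := by
  constructor
  · rintro h
    simp only [fib, Finset.mem_image, Finset.mem_filter] at h
    obtain ⟨p, ⟨hp, h2⟩, h1⟩ := h
    rwa [← h1, ← h2]
  · intro h
    simp only [fib, Finset.mem_image, Finset.mem_filter]
    exact ⟨(a, b), ⟨h, rfl⟩, rfl⟩

theorem fib_nonempty_iff {α β : Type*} [DecidableEq α] [DecidableEq β]
    (P : Finset (α × β)) (b : β) :
    (fib P b).Nonempty ↔ b ∈ P.image Prod.snd := by
  simp only [Finset.Nonempty, mem_fib, Finset.mem_image]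
  constructor
  · rintro ⟨a, ha⟩; exact ⟨(a, b), ha, rfl⟩
  · rintro ⟨⟨a, b'⟩, hp, rfl⟩; exact ⟨a, hp⟩

theorem pout_map_pair {α β : Type*} [DecidableEq α] [DecidableEq β]
    (v : List α) (b : β) (P : Finset (α × β)) :
    pout (v.map (fun a => (a, b))) P = Option.map (fun a => (a, b)) (pout v (fib P b)) := by
  rw [pout, pout, List.filter_map, List.head?_map]
  congr 2
  apply List.filter_congr
  intro x _
  simp [Function.comp, mem_fib]

theorem pout_flatMap {α β : Type*} [DecidableEq α] [DecidableEq β]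
    (u : List β) (v : List α) (hv : ∀ a, a ∈ v) (P : Finset (α × β)) :
    pout (u.flatMap fun b => v.map fun a => (a, b)) P
      = (pout u (P.image Prod.snd)).bind
          (fun b => (pout v (fib P b)).map (fun a => (a, b))) := by
  induction u with
  | nil => rfl
  | cons b u ih =>
    rw [List.flatMap_cons, pout_append, pout_map_pair, ih]
    by_cases hb : b ∈ P.image Prod.snd
    · obtain ⟨a, ha⟩ := pout_isSome hv ((fib_nonempty_iff P b).2 hb)
      have hu : pout (b :: u) (P.image Prod.snd) = some b := by
        simp [pout, List.filter_cons, hb]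
      rw [hu]
      simp [ha]
    · have hfib : fib P b = ∅ := by
        rw [← Finset.not_nonempty_iff_eq_empty]
        exact fun h => hb ((fib_nonempty_iff P b).1 h)
      have : pout v (fib P b) = none := by
        rw [pout_eq_none_iff]; simp [hfib]
      rw [this]
      have hu : pout (b :: u) (P.image Prod.snd) = pout u (P.image Prod.snd) := by
        simp [pout, List.filter_cons, hb]
      rw [hu]
      rfl

theorem fib_card_le {α β : Type*} [DecidableEq α] [DecidableEq β] (P : Finset (α × β)) (b : β) :
    (fib P b).card ≤ P.card :=
  le_trans Finset.card_image_le (Finset.card_filter_le _ _)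

theorem fib_card_filter {α β : Type*} [DecidableEq α] [DecidableEq β] (P : Finset (α × β)) (b : β) :
    (fib P b).card = (P.filter (fun p => p.2 = b)).card := by
  apply Finset.card_image_of_injOn
  intro p hp q hq hpq
  simp only [Finset.coe_filter, Set.mem_setOf_eq] at hp hq
  exact Prod.ext hpq (hp.2.trans hq.2.symm)

theorem sum_fib {α β : Type*} [DecidableEq α] [DecidableEq β] (P : Finset (α × β)) :
    ∑ b ∈ P.image Prod.snd, (fib P b).card = P.card := by
  rw [Finset.card_eq_sum_card_image Prod.snd P]
  exact Finset.sum_congr rfl (fun b _ => fib_card_filter P b)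

theorem fib_card_pos {α β : Type*} [DecidableEq α] [DecidableEq β] {P : Finset (α × β)} {b : β}
    (hb : b ∈ P.image Prod.snd) : 1 ≤ (fib P b).card :=
  Finset.card_pos.2 ((fib_nonempty_iff P b).2 hb)

theorem fib_card_add_one_le {α β : Type*} [DecidableEq α] [DecidableEq β] {P : Finset (α × β)}
    {b b' : β} (hb : b ∈ P.image Prod.snd) (hb' : b' ∈ P.image Prod.snd) (hne : b' ≠ b) :
    (fib P b).card + 1 ≤ P.card := by
  have hsub : ({b, b'} : Finset β) ⊆ P.image Prod.snd := by
    intro x hx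
    rcases Finset.mem_insert.1 hx with rfl | hx
    · exact hb
    · rw [Finset.mem_singleton.1 hx]; exact hb'
  calc (fib P b).card + 1 ≤ (fib P b).card + (fib P b').card := by
        have := fib_card_pos hb'; omega
    _ = ∑ x ∈ ({b, b'} : Finset β), (fib P x).card := by
        rw [Finset.sum_pair (Ne.symm hne)]
    _ ≤ ∑ x ∈ P.image Prod.snd, (fib P x).card :=
        Finset.sum_le_sum_of_subset hsub
    _ = P.card := sum_fib P

theorem fib_card_eq_one {α β : Type*} [DecidableEq α] [DecidableEq β] {P : Finset (α × β)}
    (hc : (P.image Prod.snd).card = P.card) {b : β} (hb : b ∈ P.image Prod.snd) :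
    (fib P b).card = 1 := by
  by_contra hne
  have h2 : 2 ≤ (fib P b).card := by have := fib_card_pos hb; omega
  have hsum : (fib P b).card + ∑ x ∈ (P.image Prod.snd).erase b, (fib P x).card
      = ∑ x ∈ P.image Prod.snd, (fib P x).card :=
    Finset.add_sum_erase _ (fun x => (fib P x).card) hb
  have hlow : ((P.image Prod.snd).erase b).card ≤ ∑ x ∈ (P.image Prod.snd).erase b, (fib P x).card := by
    rw [Finset.card_eq_sum_ones]
    exact Finset.sum_le_sum (fun x hx => fib_card_pos (Finset.mem_of_mem_erase hx))
  have hecard : ((P.image Prod.snd).erase b).card = (P.image Prod.snd).card - 1 :=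
    Finset.card_erase_of_mem hb
  have himg : 1 ≤ (P.image Prod.snd).card := Finset.card_pos.2 ⟨b, hb⟩
  rw [sum_fib] at hsum
  omega

theorem outcome_eq_pout {N : ℕ} (t : List (Fin N)) (S : Finset (Fin N)) :
    outcome t S = pout t S := rfl

theorem snd_bind {α β : Type*} [DecidableEq α] [DecidableEq β]
    (u : List β) (v : List α) (hv : ∀ a, a ∈ v) (P : Finset (α × β)) :
    Option.map Prod.snd ((pout u (P.image Prod.snd)).bind
      (fun b => (pout v (fib P b)).map (fun a => (a, b))))
    = pout u (P.image Prod.snd) := by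
  cases h : pout u (P.image Prod.snd) with
  | none => rfl
  | some b =>
    have hb : b ∈ P.image Prod.snd := pout_mem h
    obtain ⟨a, ha⟩ := pout_isSome hv ((fib_nonempty_iff P b).2 hb)
    simp [ha]

theorem nodup_pairs {α β : Type*} {u : List β} {v : List α}
    (hu : u.Nodup) (hv : v.Nodup) :
    (u.flatMap fun b => v.map fun a => (a, b)).Nodup := by
  rw [List.nodup_flatMap]
  constructor
  · intro b _
    exact hv.map (fun a a' h => congrArg Prod.fst h)
  · apply List.Pairwise.imp _ hu
    intro b b' hne
    intro p hp hp'
    simp only [List.mem_map] at hp hp'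
    obtain ⟨a, _, rfl⟩ := hp
    obtain ⟨a', _, h⟩ := hp'
    exact hne (congrArg Prod.snd h).symm

theorem mem_pairs {α β : Type*} {u : List β} {v : List α}
    (hu : ∀ b, b ∈ u) (hv : ∀ a, a ∈ v) (p : α × β) :
    p ∈ u.flatMap fun b => v.map fun a => (a, b) := by
  rw [List.mem_flatMap]
  exact ⟨p.2, hu p.2, List.mem_map.2 ⟨p.1, hv p.1, rfl⟩⟩

theorem core {n K T₁ G₁ : ℕ} (hK : 2 ≤ K)
    (𝒯₁ : Fin T₁ → List (Fin n)) (hperm₁ : ∀ i, (𝒯₁ i).Nodup ∧ ∀ x : Fin n, x ∈ 𝒯₁ i)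
    (hF₁ : Feasible n K 𝒯₁)
    (𝒢₁ : Fin G₁ → List (Fin n)) (hperm₂ : ∀ i, (𝒢₁ i).Nodup ∧ ∀ x : Fin n, x ∈ 𝒢₁ i)
    (hF₂ : Feasible n (K - 1) 𝒢₁)
    (P P' : Finset (Fin n × Fin n)) (hP : P.card ≤ K) (hP' : P'.card ≤ K)
    (hA : ∀ i, pout ((𝒯₁ i).flatMap fun b => (𝒯₁ i).map fun a => (a, b)) P
             = pout ((𝒯₁ i).flatMap fun b => (𝒯₁ i).map fun a => (a, b)) P')
    (hB : ∀ j k, pout ((𝒢₁ j).flatMap fun b => (𝒢₁ k).map fun a => (a, b)) P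
              = pout ((𝒢₁ j).flatMap fun b => (𝒢₁ k).map fun a => (a, b)) P') :
    P = P' := by
  have hA' : ∀ i, (pout (𝒯₁ i) (P.image Prod.snd)).bind
        (fun b => (pout (𝒯₁ i) (fib P b)).map (fun a => (a, b)))
      = (pout (𝒯₁ i) (P'.image Prod.snd)).bind
        (fun b => (pout (𝒯₁ i) (fib P' b)).map (fun a => (a, b))) := by
    intro i
    rw [← pout_flatMap _ _ (hperm₁ i).2, ← pout_flatMap _ _ (hperm₁ i).2]
    exact hA i
  have hB' : ∀ j k, (pout (𝒢₁ j) (P.image Prod.snd)).bind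
        (fun b => (pout (𝒢₁ k) (fib P b)).map (fun a => (a, b)))
      = (pout (𝒢₁ j) (P'.image Prod.snd)).bind
        (fun b => (pout (𝒢₁ k) (fib P' b)).map (fun a => (a, b))) := by
    intro j k
    rw [← pout_flatMap _ _ (hperm₂ k).2, ← pout_flatMap _ _ (hperm₂ k).2]
    exact hB j k
  have step1 : ∀ i, pout (𝒯₁ i) (P.image Prod.snd) = pout (𝒯₁ i) (P'.image Prod.snd) := by
    intro i
    have h := congrArg (Option.map Prod.snd) (hA' i)
    rwa [snd_bind _ _ (hperm₁ i).2, snd_bind _ _ (hperm₁ i).2] at h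
  have hcB : (P.image Prod.snd).card ≤ K := le_trans Finset.card_image_le hP
  have hcB' : (P'.image Prod.snd).card ≤ K := le_trans Finset.card_image_le hP'
  have hBB : P.image Prod.snd = P'.image Prod.snd := by
    apply hF₁ hcB hcB'
    funext i
    exact step1 i
  set B := P.image Prod.snd with hBdef
  suffices hfib : ∀ b, fib P b = fib P' b by
    ext ⟨a, b⟩
    rw [← mem_fib, ← mem_fib, hfib b]
  intro b
  by_cases hbB : b ∈ B
  case neg =>
    have h1 : fib P b = ∅ := by
      rw [← Finset.not_nonempty_iff_eq_empty, fib_nonempty_iff]; exact hbB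
    have h2 : fib P' b = ∅ := by
      rw [← Finset.not_nonempty_iff_eq_empty, fib_nonempty_iff, ← hBB]; exact hbB
    rw [h1, h2]
  case pos =>
  have hinj : Function.Injective (fun a : Fin n => (a, b)) :=
    fun a a' h => congrArg Prod.fst h
  by_cases HG : ∃ j, pout (𝒢₁ j) B = some b
  · obtain ⟨j, hj⟩ := HG
    have hk : ∀ k, pout (𝒢₁ k) (fib P b) = pout (𝒢₁ k) (fib P' b) := by
      intro k
      have h2 := hB' j k
      rw [← hBB, hj] at h2
      simp only [Option.bind_some] at h2
      exact Option.map_injective hinj h2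
    by_cases hB1 : B.card = 1
    · obtain ⟨c, hc⟩ := Finset.card_eq_one.1 hB1
      have hbc : B = {b} := by rw [hc] at hbB ⊢; rw [Finset.mem_singleton.1 hbB]
      have hAll : ∀ i, pout (𝒯₁ i) B = some b := fun i => by
        rw [hbc]; exact pout_singleton ((hperm₁ i).2 b)
      have hi' : ∀ i, pout (𝒯₁ i) (fib P b) = pout (𝒯₁ i) (fib P' b) := by
        intro i
        have h2 := hA' i
        rw [← hBB, hAll i] at h2
        simp only [Option.bind_some] at h2
        exact Option.map_injective hinj h2
      exact hF₁ (le_trans (fib_card_le P b) hP) (le_trans (fib_card_le P' b) hP')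
        (funext hi')
    · have h2B : 2 ≤ B.card := by
        have : 1 ≤ B.card := Finset.card_pos.2 ⟨b, hbB⟩
        omega
      obtain ⟨b', hb', hbne⟩ := Finset.exists_mem_ne (s := B) (by omega) b
      have hc1 : (fib P b).card + 1 ≤ P.card := fib_card_add_one_le hbB hb' hbne
      have hc2 : (fib P' b).card + 1 ≤ P'.card := by
        apply fib_card_add_one_le (by rw [← hBB]; exact hbB) (by rw [← hBB]; exact hb') hbne
      refine hF₂ ?_ ?_ (funext hk)
      · show (fib P b).card ≤ K - 1
        omega
      · show (fib P' b).card ≤ K - 1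
        omega
  · by_cases HT : ∃ i, pout (𝒯₁ i) B = some b
    · obtain ⟨i, hi⟩ := HT
      have h1 : pout (𝒯₁ i) (fib P b) = pout (𝒯₁ i) (fib P' b) := by
        have h2 := hA' i
        rw [← hBB, hi] at h2
        simp only [Option.bind_some] at h2
        exact Option.map_injective hinj h2
      have hBK : B.card = K := by
        by_contra hne
        have herase : (fun j => outcome (𝒢₁ j) (B.erase b)) = (fun j => outcome (𝒢₁ j) B) := by
          funext j
          rw [outcome_eq_pout, outcome_eq_pout]
          exact pout_erase (fun heq => HG ⟨j, heq⟩)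
        have heq := hF₂ (show (B.erase b).card ≤ K - 1 from
            le_trans (Finset.card_le_card (Finset.erase_subset b B)) (by omega))
          (show B.card ≤ K - 1 by omega) herase
        rw [← heq] at hbB
        exact Finset.notMem_erase b B hbB
      have hPK : P.card = K :=
        le_antisymm hP (hBK ▸ Finset.card_image_le)
      have hP'K : P'.card = K := by
        apply le_antisymm hP'
        calc K = B.card := hBK.symm
          _ = (P'.image Prod.snd).card := by rw [hBB]
          _ ≤ P'.card := Finset.card_image_le
      have hfc : (fib P b).card = 1 := fib_card_eq_one (by rw [hBK, hPK]) hbB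
      have hfc' : (fib P' b).card = 1 := by
        apply fib_card_eq_one
        · rw [← hBB, hBK, hP'K]
        · rw [← hBB]; exact hbB
      obtain ⟨a, ha⟩ := Finset.card_eq_one.1 hfc
      obtain ⟨a', ha'⟩ := Finset.card_eq_one.1 hfc'
      rw [ha, ha'] at h1 ⊢
      rw [pout_singleton ((hperm₁ i).2 a), pout_singleton ((hperm₁ i).2 a')] at h1
      rw [Option.some_inj.1 h1]
    · exfalso
      have herase : (fun i => outcome (𝒯₁ i) (B.erase b)) = (fun i => outcome (𝒯₁ i) B) := by
        funext i
        rw [outcome_eq_pout, outcome_eq_pout]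
        exact pout_erase (fun heq => HT ⟨i, heq⟩)
      have heq := hF₁ (le_trans (Finset.card_le_card (Finset.erase_subset b B)) hcB) hcB herase
      rw [← heq] at hbB
      exact Finset.notMem_erase b B hbB

theorem stmt14 (K n : ℕ) (hK : 3 ≤ K) (hn : K ≤ n)
    (T₁ : ℕ) (𝒯₁ : Fin T₁ → List (Fin n))
    (hperm₁ : ∀ i, (𝒯₁ i).Nodup ∧ ∀ x : Fin n, x ∈ 𝒯₁ i)
    (hF₁ : Feasible n K 𝒯₁)
    (G₁ : ℕ) (𝒢₁ : Fin G₁ → List (Fin n))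
    (hperm₂ : ∀ i, (𝒢₁ i).Nodup ∧ ∀ x : Fin n, x ∈ 𝒢₁ i)
    (hF₂ : Feasible n (K - 1) 𝒢₁) :
    ∃ T₂ : ℕ, T₂ ≤ T₁ + G₁ ^ 2 ∧ ∃ 𝒯₂ : Fin T₂ → List (Fin (n ^ 2)),
      (∀ i, (𝒯₂ i).Nodup ∧ ∀ x : Fin (n ^ 2), x ∈ 𝒯₂ i) ∧
      Feasible (n ^ 2) K 𝒯₂ := by
  -- the equivalence between pairs and `Fin (n ^ 2)`
  let e : Fin n × Fin n ≃ Fin (n ^ 2) := finProdFinEquiv.trans (finCongr (pow_two n).symm)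
  -- the design on pairs, indexed by the sum type
  let D : Fin T₁ ⊕ Fin G₁ × Fin G₁ → List (Fin n × Fin n) := fun x =>
    match x with
    | Sum.inl i => (𝒯₁ i).flatMap fun b => (𝒯₁ i).map fun a => (a, b)
    | Sum.inr (j, k) => (𝒢₁ j).flatMap fun b => (𝒢₁ k).map fun a => (a, b)
  let eqv : Fin (T₁ + G₁ ^ 2) ≃ Fin T₁ ⊕ Fin G₁ × Fin G₁ :=
    (finCongr (by rw [pow_two])).trans
      (finSumFinEquiv.symm.trans (Equiv.sumCongr (Equiv.refl _) finProdFinEquiv.symm))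
  refine ⟨T₁ + G₁ ^ 2, le_refl _, fun i => (D (eqv i)).map e, ?_, ?_⟩
  · intro i
    constructor
    · apply List.Nodup.map e.injective
      rcases h : eqv i with ii | ⟨j, k⟩
      · exact nodup_pairs (hperm₁ ii).1 (hperm₁ ii).1
      · exact nodup_pairs (hperm₂ j).1 (hperm₂ k).1
    · intro x
      rw [List.mem_map]
      refine ⟨e.symm x, ?_, e.apply_symm_apply x⟩
      rcases h : eqv i with ii | ⟨j, k⟩
      · exact mem_pairs (hperm₁ ii).2 (hperm₁ ii).2 _
      · exact mem_pairs (hperm₂ j).2 (hperm₂ k).2 _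
  · intro S hS S' hS' h
    set P : Finset (Fin n × Fin n) := S.image e.symm with hPdef
    set P' : Finset (Fin n × Fin n) := S'.image e.symm with hP'def
    have hSP : S = P.image e := by
      rw [hPdef, Finset.image_image]
      ext x
      simp
    have hSP' : S' = P'.image e := by
      rw [hP'def, Finset.image_image]
      ext x
      simp
    have hPc : P.card ≤ K := by
      rw [hPdef, Finset.card_image_of_injective _ e.symm.injective]
      exact hS
    have hPc' : P'.card ≤ K := by
      rw [hP'def, Finset.card_image_of_injective _ e.symm.injective]
      exact hS'
    have hout : ∀ x : Fin T₁ ⊕ Fin G₁ × Fin G₁, pout (D x) P = pout (D x) P' := by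
      intro x
      have hx := congrFun h (eqv.symm x)
      simp only at hx
      rw [outcome_eq_pout, outcome_eq_pout, eqv.apply_symm_apply] at hx
      rw [hSP, hSP', pout_map_equiv, pout_map_equiv] at hx
      exact Option.map_injective e.injective hx
    have : P = P' :=
      core (by omega) 𝒯₁ hperm₁ hF₁ 𝒢₁ hperm₂ hF₂ P P' hPc hPc'
        (fun i => hout (Sum.inl i)) (fun j k => hout (Sum.inr (j, k)))
    rw [hSP, hSP', this]
end

section
/- For every natural number n ≥ 3, T(n², 3) ≤ T(n, 3) + 4. -/
/-!
Identify `Fin (n ^ 2)` with the grid `Fin n × Fin n`. A test `t` of a design feasible for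
`(n, 3)` is lifted to the test of all cells whose row or column occurs in `t`, sorted by the
position of the row in `t` and then of the column; its outcome on `S` determines the outcome of
`t` on the set of rows of `S` and, when `S` lies in a single row, on its set of columns.
Four more tests scan the grid row by row, in reverse, with the columns reversed and with the
rows reversed. The first two find the lexicographically least and greatest defectives `a` and
`b`. A third defective `x` is then found from the columns if all three share a row; as the
first hit of the column-reversed (row-reversed) scan if it shares only the row of `a` (of `b`);
and otherwise through a test of the original design separating the row sets `{a, x, b}` and
`{a, b}`: that test hits the row of `x`, so its lift hits `x`.
-/

theorem Finset.eq_triple_of_card_le_three {α : Type*} [DecidableEq α] {s : Finset α} {a b c : α}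
    (hs : s.card ≤ 3) (ha : a ∈ s) (hb : b ∈ s) (hc : c ∈ s) (hab : a ≠ b) (hac : a ≠ c)
    (hbc : b ≠ c) : s = {a, b, c} := by
  refine (Finset.eq_of_subset_of_card_le ?_ (hs.trans (Finset.card_eq_three.2
    ⟨a, b, c, hab, hac, hbc, rfl⟩).ge)).symm
  intro y hy
  simp only [Finset.mem_insert, Finset.mem_singleton] at hy
  rcases hy with rfl | rfl | rfl <;> assumption

namespace CascadeTesting

open OrderDual

variable {N : ℕ}

theorem outcome_eq_none_iff {t : List (Fin N)} {S : Finset (Fin N)} :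
    outcome t S = none ↔ ∀ x ∈ t, x ∉ S := by
  simp [outcome]

theorem outcome_eq_some_iff {t : List (Fin N)} {S : Finset (Fin N)} {x : Fin N} :
    outcome t S = some x ↔
      x ∈ t ∧ x ∈ S ∧ ∀ y ∈ t, y ∈ S → t.idxOf x ≤ t.idxOf y := by
  induction t with
  | nil => simp [outcome]
  | cons a t ih =>
    by_cases ha : a ∈ S
    · have : outcome (a :: t) S = some a := by simp [outcome, ha]
      rw [this, Option.some_inj]
      grind [List.idxOf_cons_ne, List.idxOf_cons_self]
    · have : outcome (a :: t) S = outcome t S := by simp [outcome, ha]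
      have hne : ∀ y ∈ S, a ≠ y := fun y hy h => ha (h ▸ hy)
      rw [this, ih]
      grind [List.idxOf_cons_ne]

theorem mem_of_outcome_eq_some {t : List (Fin N)} {S : Finset (Fin N)} {x : Fin N}
    (h : outcome t S = some x) : x ∈ S :=
  (outcome_eq_some_iff.1 h).2.1

theorem outcome_eq_some_of_subset {t : List (Fin N)} {R₀ R : Finset (Fin N)} {r : Fin N}
    (hsub : R₀ ⊆ R) (h : outcome t R = some r) (hr : r ∈ R₀) : outcome t R₀ = some r := by
  obtain ⟨hrt, -, hmin⟩ := outcome_eq_some_iff.1 h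
  exact outcome_eq_some_iff.2 ⟨hrt, hr, fun y hy hyR₀ => hmin y hy (hsub hyR₀)⟩

theorem exists_outcome_eq_some_mem_sdiff {t : List (Fin N)} {R₀ R : Finset (Fin N)}
    (hsub : R₀ ⊆ R) (hne : outcome t R ≠ outcome t R₀) :
    ∃ r ∈ R \ R₀, outcome t R = some r := by
  obtain ⟨r, hr⟩ := Option.ne_none_iff_exists'.1 fun h : outcome t R = none => hne <| by
    rw [h, eq_comm, outcome_eq_none_iff]
    exact fun x hx hxR₀ => outcome_eq_none_iff.1 h x hx (hsub hxR₀)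
  refine ⟨r, Finset.mem_sdiff.2 ⟨mem_of_outcome_eq_some hr, fun hr₀ => hne ?_⟩, hr⟩
  rw [hr, outcome_eq_some_of_subset hsub hr hr₀]

theorem feasible_singletons (N K : ℕ) : Feasible N K fun i : Fin N => [i] := by
  intro S _ S' _ h
  ext x
  have hx := congrFun h x
  by_cases hxS : x ∈ S <;> by_cases hxS' : x ∈ S' <;> simp_all [outcome]

section SortedTest

variable {α : Type*} [LinearOrder α]

def sortedTest (κ : Fin N → α) (P : Fin N → Prop) [DecidablePred P] : List (Fin N) :=
  ((List.finRange N).filter (fun x => P x)).mergeSort (fun x y => κ x ≤ κ y)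

variable {κ : Fin N → α} {P : Fin N → Prop} [DecidablePred P]

theorem mem_sortedTest {x : Fin N} : x ∈ sortedTest κ P ↔ P x := by
  simp [sortedTest, (List.mergeSort_perm _ _).mem_iff]

theorem nodup_sortedTest : (sortedTest κ P).Nodup :=
  (List.mergeSort_perm _ _).nodup_iff.2 ((List.nodup_finRange N).filter _)

theorem pairwise_sortedTest : (sortedTest κ P).Pairwise (fun x y => κ x ≤ κ y) := by
  simpa [sortedTest] using List.pairwise_mergeSort (le := fun x y => decide (κ x ≤ κ y))
    (fun _ _ _ => by simpa using le_trans) (fun _ _ => by simpa using le_total _ _) _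

theorem outcome_sortedTest_eq_none_iff {S : Finset (Fin N)} :
    outcome (sortedTest κ P) S = none ↔ ∀ x ∈ S, ¬ P x := by
  simp only [outcome_eq_none_iff, mem_sortedTest]
  exact ⟨fun h x hxS hx => h x hx hxS, fun h x hx hxS => h x hxS hx⟩

theorem le_of_outcome_sortedTest_eq_some {S : Finset (Fin N)} {x : Fin N}
    (h : outcome (sortedTest κ P) S = some x) : ∀ y ∈ S, P y → κ x ≤ κ y := by
  obtain ⟨rest, hrest⟩ := List.head?_eq_some_iff.1 h
  have hpw := pairwise_sortedTest.filter (fun y => decide (y ∈ S)) (l := sortedTest κ P)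
  rw [hrest] at hpw
  intro y hyS hy
  have hmem : y ∈ (sortedTest κ P).filter (fun y => decide (y ∈ S)) := by
    simp [mem_sortedTest, hy, hyS]
  rw [hrest] at hmem
  rcases List.mem_cons.1 hmem with rfl | hyrest
  · exact le_rfl
  · exact List.rel_of_pairwise_cons hpw hyrest

theorem outcome_sortedTest_eq_some_iff (hκ : Function.Injective κ) {S : Finset (Fin N)}
    {x : Fin N} :
    outcome (sortedTest κ P) S = some x ↔
      x ∈ S ∧ P x ∧ ∀ y ∈ S, P y → κ x ≤ κ y := by
  constructor
  · intro h
    obtain ⟨hx, hxS, -⟩ := outcome_eq_some_iff.1 h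
    exact ⟨hxS, mem_sortedTest.1 hx, le_of_outcome_sortedTest_eq_some h⟩
  · rintro ⟨hxS, hx, hmin⟩
    cases h : outcome (sortedTest κ P) S with
    | none => exact absurd hx (outcome_sortedTest_eq_none_iff.1 h x hxS)
    | some z =>
      obtain ⟨hz, hzS, -⟩ := outcome_eq_some_iff.1 h
      have hzx : κ z = κ x :=
        (le_of_outcome_sortedTest_eq_some h x hxS hx).antisymm
          (hmin z hzS (mem_sortedTest.1 hz))
      rw [hκ hzx]

theorem outcome_image_eq_bind {M : ℕ} (f : Fin N → Fin M) (t : List (Fin M))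
    {S : Finset (Fin N)} (hP : ∀ x ∈ S, f x ∈ t → P x)
    (hκ : ∀ x ∈ S, ∀ y ∈ S, t.idxOf (f y) < t.idxOf (f x) → κ y < κ x) :
    outcome t (S.image f) =
      (outcome (sortedTest κ P) S).bind fun x => if f x ∈ t then some (f x) else none := by
  cases h : outcome (sortedTest κ P) S with
  | none =>
    rw [Option.bind_none, outcome_eq_none_iff]
    rintro _ hyt hr
    obtain ⟨y, hyS, rfl⟩ := Finset.mem_image.1 hr
    exact outcome_sortedTest_eq_none_iff.1 h y hyS (hP y hyS hyt)
  | some x =>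
    have hxS := mem_of_outcome_eq_some h
    have hfirst : ∀ y ∈ S, f y ∈ t → t.idxOf (f x) ≤ t.idxOf (f y) := fun y hyS hyt =>
      not_lt.1 fun hlt =>
        (hκ x hxS y hyS hlt).not_ge (le_of_outcome_sortedTest_eq_some h y hyS (hP y hyS hyt))
    by_cases hxt : f x ∈ t
    · rw [Option.bind_some, if_pos hxt]
      refine outcome_eq_some_iff.2 ⟨hxt, Finset.mem_image_of_mem f hxS, ?_⟩
      rintro _ hyt hr
      obtain ⟨y, hyS, rfl⟩ := Finset.mem_image.1 hr
      exact hfirst y hyS hyt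
    · rw [Option.bind_some, if_neg hxt, outcome_eq_none_iff]
      rintro _ hyt hr
      obtain ⟨y, hyS, rfl⟩ := Finset.mem_image.1 hr
      have := hfirst y hyS hyt
      rw [List.idxOf_eq_length hxt] at this
      exact (List.idxOf_lt_length_iff.2 hyt).not_ge this

end SortedTest

section Grid

variable {n : ℕ}

def cell (n : ℕ) : Fin (n ^ 2) ≃ Fin n × Fin n :=
  (finCongr (sq n)).trans finProdFinEquiv.symm

-- The last key component only breaks ties.
def liftTest (t : List (Fin n)) : List (Fin (n ^ 2)) :=
  sortedTest (fun x => toLex (t.idxOf (cell n x).1, toLex (t.idxOf (cell n x).2, x)))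
    (fun x => (cell n x).1 ∈ t ∨ (cell n x).2 ∈ t)

theorem outcome_image_fst_eq_bind (t : List (Fin n)) (S : Finset (Fin (n ^ 2))) :
    outcome t (S.image fun x => (cell n x).1) =
      (outcome (liftTest t) S).bind
        fun x => if (cell n x).1 ∈ t then some (cell n x).1 else none :=
  outcome_image_eq_bind _ t (fun _ _ => Or.inl) fun _ _ _ _ h =>
    Prod.Lex.toLex_lt_toLex.2 (Or.inl h)

theorem outcome_image_snd_eq_bind (t : List (Fin n)) {S : Finset (Fin (n ^ 2))}
    (hS : ∀ x ∈ S, ∀ y ∈ S, (cell n x).1 = (cell n y).1) :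
    outcome t (S.image fun x => (cell n x).2) =
      (outcome (liftTest t) S).bind
        fun x => if (cell n x).2 ∈ t then some (cell n x).2 else none :=
  outcome_image_eq_bind _ t (fun _ _ => Or.inr) fun x hx y hy h =>
    Prod.Lex.toLex_lt_toLex.2
      (Or.inr ⟨by rw [hS y hy x hx], Prod.Lex.toLex_lt_toLex.2 (Or.inl h)⟩)

def gridTest {α : Type*} [LinearOrder α] (κ : Fin n × Fin n → α) : List (Fin (n ^ 2)) :=
  sortedTest (fun x => κ (cell n x)) fun _ => True

theorem outcome_gridTest_eq_some_iff {α : Type*} [LinearOrder α] {κ : Fin n × Fin n → α}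
    (hκ : Function.Injective κ) {S : Finset (Fin (n ^ 2))} {x : Fin (n ^ 2)} :
    outcome (gridTest κ) S = some x ↔
      x ∈ S ∧ ∀ y ∈ S, κ (cell n x) ≤ κ (cell n y) := by
  rw [gridTest, outcome_sortedTest_eq_some_iff (κ := fun x => κ (cell n x))
    (hκ.comp (cell n).injective)]
  simp

theorem exists_outcome_gridTest_eq_some {α : Type*} [LinearOrder α] (κ : Fin n × Fin n → α)
    {S : Finset (Fin (n ^ 2))} (hS : S.Nonempty) : ∃ x, outcome (gridTest κ) S = some x := by
  obtain ⟨y, hy⟩ := hS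
  exact Option.ne_none_iff_exists'.1 fun h => outcome_sortedTest_eq_none_iff.1 h y hy trivial

theorem outcome_gridTest_toLex_snd_dual_eq_some {a x b : Fin (n ^ 2)}
    (hax : (cell n a).1 = (cell n x).1) (hcol : (cell n a).2 < (cell n x).2)
    (hxb : (cell n x).1 < (cell n b).1) :
    outcome (gridTest fun p : Fin n × Fin n => toLex (p.1, toDual p.2)) {a, x, b} = some x := by
  refine (outcome_gridTest_eq_some_iff fun p q h => by simpa [Prod.ext_iff] using h).2
    ⟨by simp, fun y hy => ?_⟩
  simp only [Finset.mem_insert, Finset.mem_singleton] at hy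
  rcases hy with rfl | rfl | rfl
  · exact le_of_lt (Prod.Lex.toLex_lt_toLex.2 (Or.inr ⟨hax.symm, toDual_lt_toDual.2 hcol⟩))
  · exact le_rfl
  · exact le_of_lt (Prod.Lex.toLex_lt_toLex.2 (Or.inl hxb))

theorem outcome_gridTest_toLex_fst_dual_eq_some {a x b : Fin (n ^ 2)}
    (hax : (cell n a).1 < (cell n x).1) (hxb : (cell n x).1 = (cell n b).1)
    (hcol : (cell n x).2 < (cell n b).2) :
    outcome (gridTest fun p : Fin n × Fin n => toLex (toDual p.1, p.2)) {a, x, b} = some x := by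
  refine (outcome_gridTest_eq_some_iff fun p q h => by simpa [Prod.ext_iff] using h).2
    ⟨by simp, fun y hy => ?_⟩
  simp only [Finset.mem_insert, Finset.mem_singleton] at hy
  rcases hy with rfl | rfl | rfl
  · exact le_of_lt (Prod.Lex.toLex_lt_toLex.2 (Or.inl (toDual_lt_toDual.2 hax)))
  · exact le_rfl
  · exact le_of_lt (Prod.Lex.toLex_lt_toLex.2 (Or.inr ⟨congrArg toDual hxb, hcol⟩))

variable {T : ℕ} {𝒯 : Fin T → List (Fin n)}

theorem subset_of_outcome_liftTest_eq (h𝒯 : Feasible n 3 𝒯) {S S' : Finset (Fin (n ^ 2))}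
    (hS : S.card ≤ 3) (hS' : S'.card ≤ 3) {r : Fin n} (hrS : ∀ y ∈ S, (cell n y).1 = r)
    (hrS' : ∀ y ∈ S', (cell n y).1 = r)
    (hL : ∀ j, outcome (liftTest (𝒯 j)) S = outcome (liftTest (𝒯 j)) S') : S ⊆ S' := by
  have hcols : S.image (fun y => (cell n y).2) = S'.image (fun y => (cell n y).2) := by
    refine h𝒯 (Finset.card_image_le.trans hS) (Finset.card_image_le.trans hS')
      (funext fun j => ?_)
    dsimp only
    rw [outcome_image_snd_eq_bind _ fun x hx y hy => (hrS x hx).trans (hrS y hy).symm,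
      outcome_image_snd_eq_bind _ fun x hx y hy => (hrS' x hx).trans (hrS' y hy).symm, hL j]
  intro x hx
  obtain ⟨y, hy, hyx⟩ := Finset.mem_image.1 (hcols ▸ Finset.mem_image_of_mem _ hx)
  obtain rfl : y = x := (cell n).injective (Prod.ext ((hrS' y hy).trans (hrS x hx).symm) hyx)
  exact hy

theorem exists_outcome_liftTest_eq_some (h𝒯 : Feasible n 3 𝒯) {a x b : Fin (n ^ 2)}
    (hxa : (cell n x).1 ≠ (cell n a).1) (hxb : (cell n x).1 ≠ (cell n b).1) :
    ∃ j, outcome (liftTest (𝒯 j)) {a, x, b} = some x := by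
  have hrows : ({a, x, b} : Finset (Fin (n ^ 2))).image (fun y => (cell n y).1) =
      {(cell n a).1, (cell n x).1, (cell n b).1} := by
    simp [Finset.image_insert]
  have hsub : {(cell n a).1, (cell n b).1} ⊆
      ({(cell n a).1, (cell n x).1, (cell n b).1} : Finset _) := by
    intro r
    simp only [Finset.mem_insert, Finset.mem_singleton]
    tauto
  obtain ⟨j, hj⟩ : ∃ j, outcome (𝒯 j) {(cell n a).1, (cell n x).1, (cell n b).1} ≠
      outcome (𝒯 j) {(cell n a).1, (cell n b).1} := by
    by_contra! h
    have := h𝒯 Finset.card_le_three (Finset.card_le_two.trans (by norm_num)) (funext h)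
    have hx : (cell n x).1 ∈ ({(cell n a).1, (cell n b).1} : Finset _) := this ▸ by simp
    simp only [Finset.mem_insert, Finset.mem_singleton] at hx
    tauto
  obtain ⟨r, hr, hjr⟩ := exists_outcome_eq_some_mem_sdiff hsub hj
  obtain rfl : r = (cell n x).1 := by
    simp only [Finset.mem_sdiff, Finset.mem_insert, Finset.mem_singleton] at hr
    tauto
  rw [← hrows, outcome_image_fst_eq_bind, Option.bind_eq_some_iff] at hjr
  obtain ⟨z, hz, hzr⟩ := hjr
  have hzx : (cell n z).1 = (cell n x).1 := by
    split_ifs at hzr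
    exact Option.some_inj.1 hzr
  have hzS := mem_of_outcome_eq_some hz
  simp only [Finset.mem_insert, Finset.mem_singleton] at hzS
  rcases hzS with rfl | rfl | rfl
  · exact absurd hzx.symm hxa
  · exact ⟨j, hz⟩
  · exact absurd hzx.symm hxb

def squareDesign (𝒯 : Fin T → List (Fin n)) : Fin (T + 4) → List (Fin (n ^ 2)) :=
  Fin.append (fun j => liftTest (𝒯 j))
    ![gridTest toLex, gridTest fun p => toDual (toLex p),
      gridTest fun p => toLex (p.1, toDual p.2), gridTest fun p => toLex (toDual p.1, p.2)]

theorem nodup_squareDesign (𝒯 : Fin T → List (Fin n)) (i : Fin (T + 4)) :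
    (squareDesign 𝒯 i).Nodup := by
  refine Fin.addCases (fun j => ?_) (fun k => ?_) i
  · rw [squareDesign, Fin.append_left]
    exact nodup_sortedTest
  · rw [squareDesign, Fin.append_right]
    fin_cases k <;> exact nodup_sortedTest

theorem mem_of_outcome_squareDesign_eq (h𝒯 : Feasible n 3 𝒯) {S' : Finset (Fin (n ^ 2))}
    (hS' : S'.card ≤ 3) {a x b : Fin (n ^ 2)} (hax : toLex (cell n a) < toLex (cell n x))
    (hxb : toLex (cell n x) < toLex (cell n b))
    (hrowS' : ∀ y ∈ S', (cell n a).1 ≤ (cell n y).1 ∧ (cell n y).1 ≤ (cell n b).1)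
    (h : ∀ i, outcome (squareDesign 𝒯 i) {a, x, b} = outcome (squareDesign 𝒯 i) S') :
    x ∈ S' := by
  have hL : ∀ j, outcome (liftTest (𝒯 j)) {a, x, b} = outcome (liftTest (𝒯 j)) S' :=
    fun j => by simpa [squareDesign] using h (Fin.castAdd 4 j)
  have hE := h (Fin.natAdd T 2)
  have hF := h (Fin.natAdd T 3)
  simp only [squareDesign, Fin.append_right, Matrix.cons_val] at hE hF
  rcases Prod.Lex.toLex_lt_toLex.1 hax with hrax | ⟨hrax, hcax⟩ <;>
    rcases Prod.Lex.toLex_lt_toLex.1 hxb with hrxb | ⟨hrxb, hcxb⟩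
  · obtain ⟨j, hj⟩ := exists_outcome_liftTest_eq_some h𝒯 hrax.ne' hrxb.ne
    exact mem_of_outcome_eq_some ((hL j).symm.trans hj)
  · exact mem_of_outcome_eq_some
      (hF.symm.trans (outcome_gridTest_toLex_fst_dual_eq_some hrax hrxb hcxb))
  · exact mem_of_outcome_eq_some
      (hE.symm.trans (outcome_gridTest_toLex_snd_dual_eq_some hrax hcax hrxb))
  · refine subset_of_outcome_liftTest_eq h𝒯 Finset.card_le_three hS' (r := (cell n a).1) ?_
      (fun y hy => ?_) hL (by simp)
    · intro y hy
      simp only [Finset.mem_insert, Finset.mem_singleton] at hy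
      rcases hy with rfl | rfl | rfl
      exacts [rfl, hrax.symm, (hrax.trans hrxb).symm]
    · exact le_antisymm (hrax.trans hrxb ▸ (hrowS' y hy).2) (hrowS' y hy).1

theorem subset_of_outcome_squareDesign_eq (h𝒯 : Feasible n 3 𝒯) {S S' : Finset (Fin (n ^ 2))}
    (hS : S.card ≤ 3) (hS' : S'.card ≤ 3)
    (h : ∀ i, outcome (squareDesign 𝒯 i) S = outcome (squareDesign 𝒯 i) S') : S ⊆ S' := by
  have hA := h (Fin.natAdd T 0)
  have hB := h (Fin.natAdd T 1)
  simp only [squareDesign, Fin.append_right, Matrix.cons_val_zero, Matrix.cons_val_one] at hA hB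
  have hκB : Function.Injective fun p : Fin n × Fin n => toDual (toLex p) :=
    toDual.injective.comp toLex.injective
  intro x hx
  obtain ⟨a, ha⟩ := exists_outcome_gridTest_eq_some toLex ⟨x, hx⟩
  obtain ⟨b, hb⟩ := exists_outcome_gridTest_eq_some (fun p => toDual (toLex p)) ⟨x, hx⟩
  obtain ⟨haS, hamin⟩ := (outcome_gridTest_eq_some_iff toLex.injective).1 ha
  obtain ⟨haS', hamin'⟩ := (outcome_gridTest_eq_some_iff toLex.injective).1 (hA.symm.trans ha)
  obtain ⟨hbS, hbmax⟩ := (outcome_gridTest_eq_some_iff hκB).1 hb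
  obtain ⟨hbS', hbmax'⟩ := (outcome_gridTest_eq_some_iff hκB).1 (hB.symm.trans hb)
  rcases eq_or_ne a x with rfl | hax
  · exact haS'
  rcases eq_or_ne x b with rfl | hxb
  · exact hbS'
  have hax' : toLex (cell n a) < toLex (cell n x) :=
    (hamin x hx).lt_of_ne fun h => hax ((cell n).injective (toLex.injective h))
  have hxb' : toLex (cell n x) < toLex (cell n b) :=
    (toDual_le_toDual.1 (hbmax x hx)).lt_of_ne fun h =>
      hxb ((cell n).injective (toLex.injective h))
  obtain rfl : S = {a, x, b} := Finset.eq_triple_of_card_le_three hS haS hx hbS hax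
    (fun h => (hax'.trans hxb').ne (congrArg _ (congrArg _ h))) hxb
  exact mem_of_outcome_squareDesign_eq h𝒯 hS' hax' hxb' (fun y hy =>
    ⟨Prod.Lex.monotone_fst _ _ (hamin' y hy),
      Prod.Lex.monotone_fst _ _ (toDual_le_toDual.1 (hbmax' y hy))⟩) h

theorem feasible_squareDesign (h𝒯 : Feasible n 3 𝒯) :
    Feasible (n ^ 2) 3 (squareDesign 𝒯) :=
  fun _ hS _ hS' h =>
    (subset_of_outcome_squareDesign_eq h𝒯 hS hS' (congrFun h)).antisymm
      (subset_of_outcome_squareDesign_eq h𝒯 hS' hS fun i => (congrFun h i).symm)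

end Grid

end CascadeTesting

theorem stmt15_general (n : ℕ) : TNK (n ^ 2) 3 ≤ TNK n 3 + 4 := by
  have hne : {T : ℕ | ∃ 𝒯 : Fin T → List (Fin n),
      (∀ i, (𝒯 i).Nodup) ∧ Feasible n 3 𝒯}.Nonempty :=
    ⟨n, _, fun _ => List.nodup_singleton _, CascadeTesting.feasible_singletons n 3⟩
  obtain ⟨𝒯, -, h𝒯⟩ := Nat.sInf_mem hne
  exact Nat.sInf_le ⟨CascadeTesting.squareDesign 𝒯, CascadeTesting.nodup_squareDesign 𝒯,
    CascadeTesting.feasible_squareDesign h𝒯⟩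

theorem stmt15 (n : ℕ) (hn : 3 ≤ n) : TNK (n ^ 2) 3 ≤ TNK n 3 + 4 :=
  stmt15_general n
end

section
/- For every natural numbers K ≥ 3 and n ≥ K, T(n², K) ≤ T(n, K) + T(n, K−1)². -/
/-!
Identify `Fin (n²)` with the grid `Fin n × Fin n`. Completing a test to an ordering of all items
that keeps it as a prefix loses no information, and for complete tests `L, M` the lexicographic
product `L ×ˢ M` returns the first occupied row of `S` along `L` together with the first element
of that row along `M`. With `A` feasible for `K` and `B` feasible for `K - 1`, the
`T(n, K) + T(n, K - 1)²` tests `A i ×ˢ A i` and `B j ×ˢ B j'` are feasible for `K`: the tests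
`A i ×ˢ A i` recover the set `R` of occupied rows, and each row `a ∈ R` comes first along some
test of `A` (of `B` if `|R| < K`), since otherwise deleting `a` from `R` would change no outcome.
If `|R| = 1` the row is recovered by `A`; if `2 ≤ |R| < K` it has fewer than `K` elements and is
recovered by `B`; if `|R| = K` it is a singleton.
-/
variable {α β ι κ : Type*}

section
variable [DecidableEq α]

def firstIn (t : List α) (S : Finset α) : Option α := t.find? (· ∈ S)

lemma outcome_eq_firstIn {N : ℕ} (t : List (Fin N)) (S : Finset (Fin N)) :
    outcome t S = firstIn t S :=
  List.head?_filter

lemma mem_of_firstIn_eq_some {t : List α} {S : Finset α} {a : α} (h : firstIn t S = some a) :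
    a ∈ S ∧ a ∈ t :=
  ⟨of_decide_eq_true (List.find?_some (p := (· ∈ S)) h), List.mem_of_find?_eq_some h⟩

lemma firstIn_cons_of_mem {a : α} {t : List α} {S : Finset α} (ha : a ∈ S) :
    firstIn (a :: t) S = some a :=
  List.find?_cons_of_pos (decide_eq_true ha)

lemma firstIn_cons_of_notMem {a : α} {t : List α} {S : Finset α} (ha : a ∉ S) :
    firstIn (a :: t) S = firstIn t S :=
  List.find?_cons_of_neg (by simpa using ha)

lemma firstIn_empty (t : List α) : firstIn t ∅ = none := by
  simp [firstIn]

lemma firstIn_prefix (P Q : List α) (S : Finset α) :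
    firstIn P S = (firstIn (P ++ Q) S).filter (· ∈ P) := by
  rw [firstIn, firstIn, List.find?_append]
  cases hP : P.find? (· ∈ S) with
  | some c => simp [Option.filter_some, List.mem_of_find?_eq_some hP]
  | none =>
    cases hQ : Q.find? (· ∈ S) with
    | none => rfl
    | some d =>
      have hdP : d ∉ P := fun hd =>
        List.find?_eq_none.mp hP d hd (List.find?_some (p := (· ∈ S)) hQ)
      simp [Option.filter_some, hdP]

lemma firstIn_erase {t : List α} {S : Finset α} {a : α} (h : firstIn t S ≠ some a) :
    firstIn t (S.erase a) = firstIn t S := by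
  induction t with
  | nil => rfl
  | cons c t ih =>
    by_cases hc : c ∈ S
    · have hca : c ≠ a := fun hca => h (hca ▸ firstIn_cons_of_mem hc)
      rw [firstIn_cons_of_mem hc, firstIn_cons_of_mem (Finset.mem_erase.mpr ⟨hca, hc⟩)]
    · rw [firstIn_cons_of_notMem hc] at h ⊢
      rw [firstIn_cons_of_notMem (fun hc' => hc (Finset.mem_of_mem_erase hc')), ih h]

lemma exists_firstIn_of_forall_mem {L : List α} (hL : ∀ x, x ∈ L) {S : Finset α}
    (hS : S.Nonempty) : ∃ c, firstIn L S = some c := by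
  obtain ⟨x, hx⟩ := hS
  exact Option.isSome_iff_exists.mp (List.find?_isSome.mpr ⟨x, hL x, decide_eq_true hx⟩)

lemma firstIn_singleton {L : List α} (hL : ∀ x, x ∈ L) (b : α) : firstIn L {b} = some b := by
  obtain ⟨c, hc⟩ := exists_firstIn_of_forall_mem hL (Finset.singleton_nonempty b)
  rw [hc, Finset.mem_singleton.mp (mem_of_firstIn_eq_some hc).1]

def Separating (k : ℕ) (D : ι → List α) : Prop :=
  Set.InjOn (fun S i => firstIn (D i) S) {S : Finset α | S.card ≤ k}

lemma feasible_iff_separating {N K T : ℕ} (𝒯 : Fin T → List (Fin N)) :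
    Feasible N K 𝒯 ↔ Separating K 𝒯 := by
  simp only [Feasible, Separating, outcome_eq_firstIn]

lemma separating_singletons (k : ℕ) : Separating k (fun x : α => [x]) := by
  intro S _ S' _ h
  ext x
  have hx := congrFun h x
  by_cases h₁ : x ∈ S <;> by_cases h₂ : x ∈ S' <;> simp [firstIn, h₁, h₂] at hx ⊢

namespace Separating
variable {k : ℕ} {D : ι → List α}

lemma exists_firstIn_eq_some (hD : Separating k D) {S : Finset α} (hS : S.card ≤ k) {a : α}
    (ha : a ∈ S) : ∃ i, firstIn (D i) S = some a := by
  by_contra! h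
  have hsame : (fun i => firstIn (D i) (S.erase a)) = fun i => firstIn (D i) S :=
    funext fun i => firstIn_erase (h i)
  exact Finset.erase_eq_self.mp (hD (Finset.card_erase_le.trans hS) hS hsame) ha

lemma comp {σ : κ → ι} (hD : Separating k D) (hσ : σ.Surjective) :
    Separating k (D ∘ σ) := by
  intro S hS S' hS' h
  refine hD hS hS' (funext fun i => ?_)
  obtain ⟨j, rfl⟩ := hσ i
  exact congrFun h j

lemma map [DecidableEq β] (hD : Separating k D) (e : α ≃ β) :
    Separating k (fun i => (D i).map e) := by
  have firstIn_map (t : List α) (S : Finset β) :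
      firstIn (t.map e) S = (firstIn t (S.map e.symm.toEmbedding)).map e := by
    simp [firstIn, List.find?_map]
  intro S hS S' hS' h
  refine Finset.map_injective e.symm.toEmbedding (hD (by simpa using hS) (by simpa using hS') ?_)
  funext i
  have hi := congrFun h i
  simp only [firstIn_map] at hi
  exact Option.map_injective e.injective hi

end Separating

section Completion
variable [Fintype α]

noncomputable def completion (t : List α) : List α := t ++ (Finset.univ \ t.toFinset).toList

lemma mem_completion (t : List α) (x : α) : x ∈ completion t := by
  by_cases hx : x ∈ t <;> simp [completion, hx]

lemma List.Nodup.completion {t : List α} (ht : t.Nodup) : (completion t).Nodup :=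
  List.nodup_append.mpr ⟨ht, Finset.nodup_toList _, by
    simpa using fun a ha b hb hab => hb (hab ▸ ha)⟩

lemma Separating.completion {k : ℕ} {D : ι → List α} (hD : Separating k D) :
    Separating k (fun i => completion (D i)) := by
  intro S hS S' hS' h
  refine hD hS hS' (funext fun i => ?_)
  simp only [firstIn_prefix (D i) (Finset.univ \ (D i).toFinset).toList]
  exact congrArg (Option.filter _) (congrFun h i)

end Completion

section Grid
variable [DecidableEq β]

def column (a : α) (X : Finset (α × β)) : Finset β :=
  (X.filter (·.1 = a)).image Prod.snd

@[simp]
lemma mem_column {a : α} {X : Finset (α × β)} {b : β} : b ∈ column a X ↔ (a, b) ∈ X := by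
  simp [column]

lemma eq_of_column_eq {X X' : Finset (α × β)} (hrows : X.image Prod.fst = X'.image Prod.fst)
    (h : ∀ a ∈ X.image Prod.fst, column a X = column a X') : X = X' := by
  ext ⟨a, b⟩
  by_cases ha : a ∈ X.image Prod.fst
  · rw [← mem_column, h a ha, mem_column]
  · have ha' : a ∉ X'.image Prod.fst := hrows ▸ ha
    exact iff_of_false (fun hX => ha (Finset.mem_image_of_mem _ hX))
      (fun hX' => ha' (Finset.mem_image_of_mem _ hX'))

lemma card_column_le (a : α) (X : Finset (α × β)) : (column a X).card ≤ X.card :=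
  Finset.card_le_card_of_injOn (Prod.mk a) (fun _ hb => mem_column.mp hb)
    (Prod.mk_right_injective a).injOn

lemma card_column_lt {a a' : α} {X : Finset (α × β)} (ha' : a' ∈ X.image Prod.fst)
    (hne : a' ≠ a) : (column a X).card < X.card := by
  obtain ⟨⟨a', b'⟩, hb', rfl⟩ := Finset.mem_image.mp ha'
  calc (column a X).card ≤ (X.erase (a', b')).card :=
        Finset.card_le_card_of_injOn (Prod.mk a)
          (fun b hb => Finset.mem_erase.mpr ⟨fun h => hne (congrArg Prod.fst h).symm,
            mem_column.mp hb⟩)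
          (Prod.mk_right_injective a).injOn
    _ < X.card := Finset.card_erase_lt_of_mem hb'

lemma column_eq_singleton {X : Finset (α × β)} (hX : Set.InjOn Prod.fst (X : Set (α × β)))
    {a : α} {b : β} (hab : (a, b) ∈ X) : column a X = {b} := by
  ext b'
  rw [mem_column, Finset.mem_singleton]
  exact ⟨fun hab' => congrArg Prod.snd (hX hab' hab rfl), fun h => h ▸ hab⟩

lemma firstIn_product {L : List α} {M : List β} (hM : ∀ b, b ∈ M) (X : Finset (α × β)) :
    firstIn (L ×ˢ M) X =
      (firstIn L (X.image Prod.fst)).bind fun a => (firstIn M (column a X)).map (a, ·) := by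
  have firstIn_row (a : α) : firstIn (M.map (a, ·)) X = (firstIn M (column a X)).map (a, ·) := by
    simp [firstIn, List.find?_map]
  induction L with
  | nil => rfl
  | cons a L ih =>
    rw [List.product_cons, firstIn, List.find?_append, ← firstIn, ← firstIn, firstIn_row, ih]
    by_cases ha : a ∈ X.image Prod.fst
    · obtain ⟨⟨_, b⟩, hb, rfl⟩ := Finset.mem_image.mp ha
      obtain ⟨c, hc⟩ := exists_firstIn_of_forall_mem hM ⟨b, mem_column.mpr hb⟩
      simp [firstIn_cons_of_mem ha, hc]
    · have hcol : column a X = ∅ := Finset.eq_empty_of_forall_notMem fun b hb =>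
        ha (Finset.mem_image_of_mem _ (mem_column.mp hb))
      simp [firstIn_cons_of_notMem ha, hcol, firstIn_empty]

lemma firstIn_product_map_fst {L : List α} {M : List β} (hM : ∀ b, b ∈ M)
    (X : Finset (α × β)) :
    (firstIn (L ×ˢ M) X).map Prod.fst = firstIn L (X.image Prod.fst) := by
  rw [firstIn_product hM]
  cases ha : firstIn L (X.image Prod.fst) with
  | none => rfl
  | some a =>
    obtain ⟨⟨_, b⟩, hb, rfl⟩ := Finset.mem_image.mp (mem_of_firstIn_eq_some ha).1
    obtain ⟨c, hc⟩ := exists_firstIn_of_forall_mem hM ⟨b, mem_column.mpr hb⟩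
    simp [hc]

lemma firstIn_column_eq {L : List α} {M : List β} (hM : ∀ b, b ∈ M) {X X' : Finset (α × β)}
    (hrows : X.image Prod.fst = X'.image Prod.fst)
    (h : firstIn (L ×ˢ M) X = firstIn (L ×ˢ M) X') {a : α}
    (ha : firstIn L (X.image Prod.fst) = some a) :
    firstIn M (column a X) = firstIn M (column a X') := by
  rw [firstIn_product hM, firstIn_product hM, ← hrows, ha] at h
  exact Option.map_injective (Prod.mk_right_injective a) h

end Grid

end

def gridDesign (A : ι → List α) (B : κ → List α) : ι ⊕ κ × κ → List (α × α) :=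
  Sum.elim (fun i => A i ×ˢ A i) (fun p => B p.1 ×ˢ B p.2)

lemma nodup_gridDesign {A : ι → List α} {B : κ → List α} (hA : ∀ i, (A i).Nodup)
    (hB : ∀ j, (B j).Nodup) (p : ι ⊕ κ × κ) : (gridDesign A B p).Nodup := by
  rcases p with i | ⟨j, j'⟩
  · exact (hA i).product (hA i)
  · exact (hB j).product (hB j')

theorem Separating.gridDesign [DecidableEq α] {k : ℕ} {A : ι → List α} {B : κ → List α}
    (hAcov : ∀ i x, x ∈ A i) (hBcov : ∀ j x, x ∈ B j)
    (hA : Separating k A) (hB : Separating (k - 1) B) :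
    Separating k (gridDesign A B) := by
  intro X (hX : X.card ≤ k) X' (hX' : X'.card ≤ k) h
  have hA' (i : ι) : firstIn (A i ×ˢ A i) X = firstIn (A i ×ˢ A i) X' := congrFun h (.inl i)
  have hB' (j j' : κ) : firstIn (B j ×ˢ B j') X = firstIn (B j ×ˢ B j') X' :=
    congrFun h (.inr (j, j'))
  have hrows : X.image Prod.fst = X'.image Prod.fst := by
    refine hA (Finset.card_image_le.trans hX) (Finset.card_image_le.trans hX') (funext fun i => ?_)
    simp only [← firstIn_product_map_fst (hAcov i), hA' i]
  refine eq_of_column_eq hrows fun a ha => ?_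
  have ha' : a ∈ X'.image Prod.fst := hrows ▸ ha
  rcases le_or_gt (X.image Prod.fst).card 1 with hone | htwo
  · -- the only row is all of `X`, read with `A` by the tests `A i ×ˢ A i`
    have hsingle : X.image Prod.fst = {a} :=
      Finset.eq_singleton_iff_unique_mem.mpr
        ⟨ha, fun a' ha'' => Finset.card_le_one.mp hone _ ha'' _ ha⟩
    refine hA ((card_column_le a X).trans hX) ((card_column_le a X').trans hX')
      (funext fun i => ?_)
    exact firstIn_column_eq (hAcov i) hrows (hA' i) (hsingle ▸ firstIn_singleton (hAcov i) a)
  rcases le_or_gt (X.image Prod.fst).card (k - 1) with hsmall | hlarge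
  · -- each row has at most `k - 1` elements and comes first along some `B j`
    obtain ⟨j, hj⟩ := hB.exists_firstIn_eq_some hsmall ha
    obtain ⟨a', ha'', hne⟩ := Finset.exists_mem_ne htwo a
    have hcol : (column a X).card ≤ k - 1 := by have := card_column_lt ha'' hne; omega
    have hcol' : (column a X').card ≤ k - 1 := by
      have := card_column_lt (hrows ▸ ha'') hne; omega
    refine hB hcol hcol' (funext fun j' => ?_)
    exact firstIn_column_eq (hBcov j') hrows (hB' j j') hj
  · -- `k` rows of at most `k` elements: every row is a singleton
    obtain ⟨i, hi⟩ := hA.exists_firstIn_eq_some (Finset.card_image_le.trans hX) ha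
    have hinj : Set.InjOn Prod.fst (X : Set (α × α)) :=
      Finset.card_image_iff.mp (le_antisymm Finset.card_image_le (by omega))
    have hinj' : Set.InjOn Prod.fst (X' : Set (α × α)) :=
      Finset.card_image_iff.mp (le_antisymm Finset.card_image_le (by rw [← hrows]; omega))
    obtain ⟨⟨_, b⟩, hb, rfl⟩ := Finset.mem_image.mp ha
    obtain ⟨⟨_, b'⟩, hb', rfl⟩ := Finset.mem_image.mp ha'
    have hcol := firstIn_column_eq (hAcov i) hrows (hA' i) hi
    rw [column_eq_singleton hinj hb, column_eq_singleton hinj' hb', firstIn_singleton (hAcov i),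
      firstIn_singleton (hAcov i)] at hcol
    rw [column_eq_singleton hinj hb, column_eq_singleton hinj' hb', Option.some_inj.mp hcol]

lemma TNK_le_card [DecidableEq α] [Fintype ι] {N K : ℕ} (e : α ≃ Fin N) (D : ι → List α)
    (hnodup : ∀ i, (D i).Nodup) (hD : Separating K D) : TNK N K ≤ Fintype.card ι := by
  let q := (Fintype.equivFin ι).symm
  refine Nat.sInf_le ⟨fun j => (D (q j)).map e, fun j => (hnodup (q j)).map e.injective, ?_⟩
  rw [feasible_iff_separating]
  exact (hD.comp q.surjective).map e

lemma exists_separating_TNK (N K : ℕ) :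
    ∃ 𝒯 : Fin (TNK N K) → List (Fin N), (∀ i, (𝒯 i).Nodup) ∧ Separating K 𝒯 := by
  simp only [← feasible_iff_separating]
  exact Nat.sInf_mem
    (s := {T | ∃ 𝒯 : Fin T → List (Fin N), (∀ i, (𝒯 i).Nodup) ∧ Feasible N K 𝒯})
    ⟨N, fun x => [x], fun x => List.nodup_singleton x,
      (feasible_iff_separating _).mpr (separating_singletons K)⟩

theorem stmt16_general (K n : ℕ) :
    TNK (n ^ 2) K ≤ TNK n K + TNK n (K - 1) ^ 2 := by
  obtain ⟨A, hAnodup, hA⟩ := exists_separating_TNK n K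
  obtain ⟨B, hBnodup, hB⟩ := exists_separating_TNK n (K - 1)
  let e : Fin n × Fin n ≃ Fin (n ^ 2) := finProdFinEquiv.trans (finCongr (sq n).symm)
  have hgrid := hA.completion.gridDesign (B := fun j => completion (B j))
    (fun i => mem_completion (A i)) (fun j => mem_completion (B j)) hB.completion
  calc TNK (n ^ 2) K
      ≤ Fintype.card (Fin (TNK n K) ⊕ Fin (TNK n (K - 1)) × Fin (TNK n (K - 1))) :=
        TNK_le_card e _ (nodup_gridDesign (fun i => (hAnodup i).completion)
          (fun j => (hBnodup j).completion)) hgrid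
    _ = TNK n K + TNK n (K - 1) ^ 2 := by simp [sq]

theorem stmt16 (K n : ℕ) (hK : 3 ≤ K) (hn : K ≤ n) :
    TNK (n ^ 2) K ≤ TNK n K + TNK n (K - 1) ^ 2 :=
  stmt16_general K n
end

section
/- For every fixed natural number K ≥ 3 there exist a constant C > 0 and a natural number N₀ such that for all N ≥ N₀, T(N, K) ≤ C · (log log N)^(2^(K−2) − 1), where log denotes the natural logarithm. -/
/-!
Identify the items with bit strings of length `L ≈ log₂ N`. The cascaded test with mask `m` lists
the items in increasing order of `x ^^^ m`, so its outcome on `S` is the `x ∈ S` such that, for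
every other `y ∈ S`, `m` agrees with `x` at the highest bit where `x` and `y` differ. If the masks
realise every pattern on every `K - 1` bit positions, then every element of `S` is the outcome of
some test, so `S` is the set of outcomes. A union bound produces such a family of
`O_K(log L) = O_K(log log N)` masks, and `log log N ≤ (log log N) ^ (2 ^ (K - 2) - 1)` once
`log log N ≥ 1`.
-/

open Finset Fintype Real

theorem List.head?_eq_some_of_pairwise_lt {α β : Type*} [Preorder β] {f : α → β}
    {l : List α} (hl : l.Pairwise (fun a b => f a < f b)) {x : α} (hx : x ∈ l)
    (hmin : ∀ y ∈ l, y ≠ x → f x < f y) : l.head? = some x := by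
  cases l with
  | nil => simp at hx
  | cons a l =>
    rw [List.head?_cons, Option.some_inj]
    by_contra hax
    have hxl : x ∈ l := (List.mem_cons.1 hx).resolve_left (Ne.symm hax)
    exact lt_asymm (List.rel_of_pairwise_cons hl hxl) (hmin a List.mem_cons_self hax)

theorem Nat.xor_lt_xor_of_testBit_log2 {x y m : ℕ} (hxy : x ≠ y)
    (hm : m.testBit (x ^^^ y).log2 = x.testBit (x ^^^ y).log2) : x ^^^ m < y ^^^ m := by
  set i := (x ^^^ y).log2
  have hd : x ^^^ y ≠ 0 := fun h => hxy (Nat.xor_eq_zero_iff.1 h)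
  have hi : (x.testBit i ^^ y.testBit i) = true := by
    simpa only [Nat.testBit_xor] using Nat.testBit_log2 hd
  have hhigh : ∀ j, i < j → x.testBit j = y.testBit j := fun j hj => by
    have := Nat.testBit_lt_two_pow ((Nat.lt_log2_self).trans_le (Nat.pow_le_pow_right two_pos hj))
    simpa [Nat.testBit_xor] using this
  refine Nat.lt_of_testBit i ?_ ?_ fun j hj => ?_
  · simp [Nat.testBit_xor, hm]
  · rwa [Nat.testBit_xor, hm, Bool.xor_comm]
  · simp [Nat.testBit_xor, hhigh j hj]

theorem Nat.testBit_finFunctionFinEquiv {L : ℕ} (f : Fin L → Fin 2) (p : Fin L) :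
    (finFunctionFinEquiv f : ℕ).testBit p = decide (f p = 1) := by
  conv_rhs => rw [← finFunctionFinEquiv.symm_apply_apply f]
  simp only [Nat.testBit_eq_decide_div_mod_eq, Fin.ext_iff, finFunctionFinEquiv_symm_apply_val]
  rfl

theorem Nat.mul_pred_pow_lt_pow {a B s : ℕ} (ha : 2 ≤ a) (hB : B < 2 ^ s) :
    B * (a - 1) ^ ((a - 1) * s) < a ^ ((a - 1) * s) := by
  have hbern : 2 * (a - 1) ^ (a - 1) ≤ a ^ (a - 1) := by
    have := pow_add_mul_le_add_pow (a := a - 1) (b := 1) (Nat.zero_le _) (by omega) (a - 1)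
    rwa [Nat.cast_id, mul_one, mul_pow_sub_one (by omega), Nat.sub_add_cancel (by omega),
      ← two_mul] at this
  calc B * (a - 1) ^ ((a - 1) * s) < 2 ^ s * (a - 1) ^ ((a - 1) * s) :=
        Nat.mul_lt_mul_of_pos_right hB (Nat.pow_pos (by omega))
    _ = (2 * (a - 1) ^ (a - 1)) ^ s := by rw [mul_pow, pow_mul]
    _ ≤ (a ^ (a - 1)) ^ s := Nat.pow_le_pow_left hbern s
    _ = a ^ ((a - 1) * s) := (pow_mul a _ s).symm

namespace CascadedTesting

theorem mem_of_outcome_eq_some {N : ℕ} {t : List (Fin N)} {S : Finset (Fin N)} {x : Fin N}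
    (h : outcome t S = some x) : x ∈ S :=
  of_decide_eq_true (List.mem_filter.1 (List.mem_of_mem_head? h)).2

theorem feasible_of_forall_exists_outcome_eq {N K T : ℕ} {𝒯 : Fin T → List (Fin N)}
    (h𝒯 : ∀ S : Finset (Fin N), #S ≤ K → ∀ x ∈ S, ∃ i, outcome (𝒯 i) S = some x) :
    Feasible N K 𝒯 := by
  intro S₁ hS₁ S₂ hS₂ hout
  ext x
  constructor
  · intro hx
    obtain ⟨i, hi⟩ := h𝒯 S₁ hS₁ x hx
    exact mem_of_outcome_eq_some ((congrFun hout i).symm.trans hi)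
  · intro hx
    obtain ⟨i, hi⟩ := h𝒯 S₂ hS₂ x hx
    exact mem_of_outcome_eq_some ((congrFun hout i).trans hi)

def xorTest (N m : ℕ) : List (Fin N) :=
  (List.finRange N).mergeSort fun a b => (a : ℕ) ^^^ m ≤ (b : ℕ) ^^^ m

theorem nodup_xorTest (N m : ℕ) : (xorTest N m).Nodup :=
  List.nodup_mergeSort.2 (List.nodup_finRange N)

theorem pairwise_xorTest (N m : ℕ) :
    (xorTest N m).Pairwise fun a b : Fin N => (a : ℕ) ^^^ m < (b : ℕ) ^^^ m := by
  have hsorted := List.pairwise_mergeSort (l := List.finRange N)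
    (le := fun a b : Fin N => decide ((a : ℕ) ^^^ m ≤ (b : ℕ) ^^^ m))
    (fun _ _ _ hab hbc => decide_eq_true (le_trans (of_decide_eq_true hab) (of_decide_eq_true hbc)))
    (fun a b => by simpa using le_total ((a : ℕ) ^^^ m) ((b : ℕ) ^^^ m))
  refine (hsorted.and (nodup_xorTest N m)).imp fun ⟨hle, hne⟩ =>
    lt_of_le_of_ne (of_decide_eq_true hle) fun heq => hne (Fin.ext ?_)
  simpa [xor_cancel_right] using congrArg (· ^^^ m) heq

theorem outcome_xorTest {N m : ℕ} {S : Finset (Fin N)} {x : Fin N} (hx : x ∈ S)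
    (hmin : ∀ y ∈ S, y ≠ x → (x : ℕ) ^^^ m < (y : ℕ) ^^^ m) :
    outcome (xorTest N m) S = some x :=
  List.head?_eq_some_of_pairwise_lt ((pairwise_xorTest N m).filter _)
    (List.mem_filter.2 ⟨List.mem_mergeSort.2 (List.mem_finRange x), decide_eq_true hx⟩)
    fun y hy => hmin y (of_decide_eq_true (List.mem_filter.1 hy).2)

section Universal

def IsUniversal {ι α β : Type*} (t : ℕ) (A : ι → α → β) : Prop :=
  ∀ P : Finset α, #P ≤ t → ∀ ε : α → β, ∃ i, ∀ p ∈ P, A i p = ε p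

variable {α β : Type*} [Fintype α] [DecidableEq α] [Fintype β]

theorem card_piFinset_agreeOn (P : Finset α) (ε : P → β) :
    #(piFinset fun a => if h : a ∈ P then {ε ⟨a, h⟩} else univ) =
      card β ^ (card α - #P) := by
  rw [card_piFinset]
  calc ∏ a, #(if h : a ∈ P then {ε ⟨a, h⟩} else univ)
      = ∏ a, if a ∈ P then 1 else card β := by
        refine prod_congr rfl fun a _ => ?_
        split_ifs <;> simp
    _ = card β ^ (card α - #P) := by
        rw [prod_ite, prod_const_one, one_mul, prod_const, filter_not, card_sdiff_of_subset
          (filter_subset _ _), card_univ, filter_mem_eq_inter, univ_inter]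

theorem exists_isUniversal [Nonempty β] {t T : ℕ} (ht : t ≤ card α)
    (hT : (card α).choose t * card β ^ t * (card β ^ t - 1) ^ T < card β ^ (t * T)) :
    ∃ A : Fin T → α → β, IsUniversal t A := by
  classical
  let J := Σ P : powersetCard t (univ : Finset α), (P.1 → β)
  let good (j : J) : Finset (α → β) :=
    piFinset fun a => if h : a ∈ j.1.1 then {j.2 ⟨a, h⟩} else univ
  let bad (j : J) : Finset (Fin T → α → β) := piFinset fun _ => (good j)ᶜ
  have hcard_bad (j : J) :
      #(bad j) = card β ^ ((card α - t) * T) * (card β ^ t - 1) ^ T := by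
    have hP : #j.1.1 = t := (mem_powersetCard.1 j.1.2).2
    rw [card_piFinset, prod_const, card_univ, Fintype.card_fin, card_compl,
      card_piFinset_agreeOn, hP, Fintype.card_pi, prod_const, card_univ, pow_mul, ← mul_pow,
      Nat.mul_sub, mul_one, ← pow_add, Nat.sub_add_cancel ht]
  have hcard_J : card J = (card α).choose t * card β ^ t := by
    simp only [J, Fintype.card_sigma, Fintype.card_fun, Fintype.card_coe]
    rw [sum_coe_sort (powersetCard t univ) (fun P => card β ^ #P),
      Finset.sum_congr rfl fun P hP => by rw [(mem_powersetCard.1 hP).2], sum_const,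
      card_powersetCard, card_univ, smul_eq_mul]
  obtain ⟨A, hA⟩ : ∃ A : Fin T → α → β, ∀ j, A ∉ bad j := by
    by_contra! hcover
    have := calc card β ^ (card α * T)
        = #(univ : Finset (Fin T → α → β)) := by simp [pow_mul]
      _ ≤ #(univ.biUnion bad) := card_le_card fun A _ => by
          obtain ⟨j, hj⟩ := hcover A; exact mem_biUnion.2 ⟨j, mem_univ j, hj⟩
      _ ≤ ∑ j, #(bad j) := card_biUnion_le
      _ = card β ^ ((card α - t) * T) *
          ((card α).choose t * card β ^ t * (card β ^ t - 1) ^ T) := by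
          rw [sum_congr rfl fun j _ => hcard_bad j, sum_const, card_univ, hcard_J, smul_eq_mul]
          ring
      _ < card β ^ ((card α - t) * T) * card β ^ (t * T) :=
          Nat.mul_lt_mul_of_pos_left hT (by positivity)
      _ = card β ^ (card α * T) := by rw [← pow_add, ← add_mul, Nat.sub_add_cancel ht]
    exact lt_irrefl _ this
  refine ⟨A, fun P hP ε => ?_⟩
  obtain ⟨Q, hPQ, hQ⟩ := exists_superset_card_eq hP ht
  have hgood := hA ⟨⟨Q, mem_powersetCard.2 ⟨subset_univ Q, hQ⟩⟩, fun p => ε p⟩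
  simp only [bad, mem_piFinset, mem_compl, not_forall, not_not] at hgood
  obtain ⟨i, hi⟩ := hgood
  refine ⟨i, fun p hp => ?_⟩
  simpa [good, hPQ hp] using mem_piFinset.1 hi p

end Universal

theorem exists_outcome_xorTest_eq {N L t T : ℕ} (hN : N ≤ 2 ^ L)
    {A : Fin T → Fin L → Fin 2} (hA : IsUniversal t A) {S : Finset (Fin N)} (hS : #S ≤ t + 1)
    {x : Fin N} (hx : x ∈ S) :
    ∃ i, outcome (xorTest N (finFunctionFinEquiv (A i))) S = some x := by
  have hlt (y : Fin N) : (y : ℕ) < 2 ^ L := y.2.trans_le hN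
  let P : Finset (Fin L) :=
    univ.filter fun p => (p : ℕ) ∈ (S.erase x).image fun y : Fin N => ((x : ℕ) ^^^ y).log2
  have hP : #P ≤ t := calc
    #P ≤ #((S.erase x).image fun y : Fin N => ((x : ℕ) ^^^ y).log2) :=
      card_le_card_of_injOn Fin.val (fun p hp => (mem_filter.1 hp).2) Fin.val_injective.injOn
    _ ≤ #(S.erase x) := card_image_le
    _ ≤ t := by rw [card_erase_of_mem hx]; omega
  obtain ⟨i, hi⟩ := hA P hP (finFunctionFinEquiv.symm ⟨x, hlt x⟩)
  refine ⟨i, outcome_xorTest hx fun y hy hyx => ?_⟩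
  have hxy : (x : ℕ) ≠ y := fun h => hyx (Fin.ext h).symm
  have hpL : ((x : ℕ) ^^^ y).log2 < L :=
    (Nat.log2_lt fun h => hxy (Nat.xor_eq_zero_iff.1 h)).2 (Nat.xor_lt_two_pow (hlt x) (hlt y))
  have hpP : (⟨_, hpL⟩ : Fin L) ∈ P :=
    mem_filter.2 ⟨mem_univ _, mem_image.2 ⟨y, mem_erase.2 ⟨hyx, hy⟩, rfl⟩⟩
  refine Nat.xor_lt_xor_of_testBit_log2 hxy ?_
  have hbit :=
    Nat.testBit_finFunctionFinEquiv (finFunctionFinEquiv.symm ⟨x, hlt x⟩) ⟨_, hpL⟩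
  rw [Equiv.apply_symm_apply] at hbit
  rw [Nat.testBit_finFunctionFinEquiv (A i) ⟨_, hpL⟩, hi _ hpP, hbit]

theorem TNK_succ_le {N L t s : ℕ} (hN : N ≤ 2 ^ L) (ht : 1 ≤ t) (htL : t ≤ L)
    (hs : L ^ t * 2 ^ t < 2 ^ s) : TNK N (t + 1) ≤ (2 ^ t - 1) * s := by
  obtain ⟨A, hA⟩ := exists_isUniversal (α := Fin L) (β := Fin 2) (T := (2 ^ t - 1) * s)
    (by simpa using htL) <| by
      simp only [Fintype.card_fin]
      calc L.choose t * 2 ^ t * (2 ^ t - 1) ^ ((2 ^ t - 1) * s)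
          ≤ L ^ t * 2 ^ t * (2 ^ t - 1) ^ ((2 ^ t - 1) * s) := by
            gcongr; exact Nat.choose_le_pow L t
        _ < (2 ^ t) ^ ((2 ^ t - 1) * s) :=
            Nat.mul_pred_pow_lt_pow (Nat.le_self_pow (by omega) 2) hs
        _ = 2 ^ (t * ((2 ^ t - 1) * s)) := (pow_mul 2 t _).symm
  refine Nat.sInf_le ⟨fun i => xorTest N (finFunctionFinEquiv (A i)), fun i => nodup_xorTest _ _,
    feasible_of_forall_exists_outcome_eq fun S hS x hx => ?_⟩
  exact exists_outcome_xorTest_eq hN hA hS hx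

theorem TNK_le_natLog_natLog {N K : ℕ} (hK : 2 ≤ K) (hN : 2 ^ K ≤ N) :
    TNK N K ≤ K * 2 ^ K * (Nat.log 2 (Nat.log 2 N + 1) + 2) := by
  set L := Nat.log 2 N + 1
  set ℓ := Nat.log 2 L
  have hKN : K ≤ Nat.log 2 N := Nat.le_log_of_pow_le one_lt_two hN
  have hs : L ^ (K - 1) * 2 ^ (K - 1) < 2 ^ ((K - 1) * (ℓ + 2)) := by
    have h2L : 2 * L < 2 ^ (ℓ + 2) := by
      have : L < 2 ^ (ℓ + 1) := Nat.lt_pow_succ_log_self one_lt_two L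
      rw [pow_succ] at this ⊢; omega
    rw [← mul_pow, mul_comm L, pow_mul']
    exact Nat.pow_lt_pow_left h2L (by omega)
  have hT := TNK_succ_le (Nat.lt_pow_succ_log_self one_lt_two N).le (by omega) (by omega) hs
  rw [Nat.sub_add_cancel (by omega : 1 ≤ K)] at hT
  calc TNK N K ≤ (2 ^ (K - 1) - 1) * ((K - 1) * (ℓ + 2)) := hT
    _ ≤ 2 ^ K * (K * (ℓ + 2)) := by
        gcongr
        · exact (Nat.sub_le _ _).trans (Nat.pow_le_pow_right two_pos (Nat.sub_le _ _))
        · exact Nat.sub_le _ _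
    _ = K * 2 ^ K * (ℓ + 2) := by ring

end CascadedTesting

theorem natLog_two_le_two_mul_log (n : ℕ) : (Nat.log 2 n : ℝ) ≤ 2 * log n := by
  have hlogb : (Nat.log 2 n : ℝ) ≤ log n / log 2 := by
    simpa [Real.logb] using natLog_le_logb n 2
  have h2 : (0.6931471803 : ℝ) < log 2 := log_two_gt_d9
  have hn : 0 ≤ log n := log_natCast_nonneg n
  have : log n / log 2 ≤ 2 * log n := by
    rw [div_le_iff₀ (by linarith)]; nlinarith
  linarith

theorem exp_one_le_log {n : ℕ} (hn : 16 ≤ n) : exp 1 ≤ log n := calc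
  exp 1 ≤ 4 * log 2 := by linarith [exp_one_lt_d9, log_two_gt_d9]
  _ = log 16 := by rw [show (16 : ℝ) = 2 ^ 4 by norm_num, log_pow]; norm_num
  _ ≤ log n := log_le_log (by norm_num) (by exact_mod_cast hn)

theorem one_le_log_log {n : ℕ} (hn : 16 ≤ n) : 1 ≤ log (log n) :=
  (le_log_iff_exp_le ((exp_pos 1).trans_le (exp_one_le_log hn))).2 (exp_one_le_log hn)

theorem natLog_two_natLog_two_add_two_le {n : ℕ} (hn : 16 ≤ n) :
    (Nat.log 2 (Nat.log 2 n + 1) + 2 : ℝ) ≤ 8 * log (log n) := by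
  have hlog : 1 ≤ log n := by linarith [add_one_le_exp (1 : ℝ), exp_one_le_log hn]
  have hL : ((Nat.log 2 n + 1 : ℕ) : ℝ) ≤ 3 * log n := by
    push_cast; linarith [natLog_two_le_two_mul_log n]
  have h3 : log 3 ≤ 2 := by linarith [log_le_sub_one_of_pos (x := 3) (by norm_num)]
  calc (Nat.log 2 (Nat.log 2 n + 1) + 2 : ℝ)
      ≤ 2 * log (Nat.log 2 n + 1 : ℕ) + 2 := by
        linarith [natLog_two_le_two_mul_log (Nat.log 2 n + 1)]
    _ ≤ 2 * log (3 * log n) + 2 := by gcongr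
    _ = 2 * log 3 + 2 * log (log n) + 2 := by rw [log_mul (by norm_num) (by linarith)]; ring
    _ ≤ 8 * log (log n) := by linarith [one_le_log_log hn]

theorem stmt17 (K : ℕ) (hK : 3 ≤ K) :
    ∃ C : ℝ, 0 < C ∧ ∃ N₀ : ℕ, ∀ N : ℕ, N₀ ≤ N →
      (TNK N K : ℝ) ≤ C * Real.log (Real.log N) ^ (2 ^ (K - 2) - 1) := by
  refine ⟨8 * K * 2 ^ K, by positivity, 2 ^ K + 16, fun N hN => ?_⟩
  have hN16 : 16 ≤ N := (Nat.le_add_left 16 _).trans hN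
  have hexp : 2 ^ (K - 2) - 1 ≠ 0 := by
    have := Nat.one_lt_two_pow (n := K - 2) (by omega); omega
  calc (TNK N K : ℝ) ≤ K * 2 ^ K * (Nat.log 2 (Nat.log 2 N + 1) + 2 : ℝ) := by
        exact_mod_cast CascadedTesting.TNK_le_natLog_natLog (by omega) (by omega)
    _ ≤ K * 2 ^ K * (8 * Real.log (Real.log N)) := by
        gcongr; exact natLog_two_natLog_two_add_two_le hN16
    _ = 8 * K * 2 ^ K * Real.log (Real.log N) := by ring
    _ ≤ 8 * K * 2 ^ K * Real.log (Real.log N) ^ (2 ^ (K - 2) - 1) := by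
        gcongr; exact le_self_pow₀ (one_le_log_log hN16) hexp
end

section
/- Let N, K be natural numbers with 1 ≤ K ≤ N. Then every testing design feasible for (N, K) has at least K tests; that is, T(N, K) ≥ K. -/
lemma mem_of_outcome_some {N : ℕ} {t : List (Fin N)} {S : Finset (Fin N)} {v : Fin N}
    (h : outcome t S = some v) : v ∈ S := by
  have hv : v ∈ t.filter (fun x => x ∈ S) := List.mem_of_mem_head? h
  simpa using (List.of_mem_filter hv)

lemma outcome_eq_of_subset {N : ℕ} (t : List (Fin N)) (S R : Finset (Fin N))
    (hRS : R ⊆ S) (h : ∀ v, outcome t S = some v → v ∈ R) :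
    outcome t R = outcome t S := by
  induction t with
  | nil => rfl
  | cons a t ih =>
    by_cases ha : a ∈ S
    · have haR : a ∈ R := h a (by simp [outcome, ha])
      simp [outcome, ha, haR]
    · have haR : a ∉ R := fun hr => ha (hRS hr)
      have h1 : outcome (a :: t) S = outcome t S := by
        simp [outcome, List.filter_cons, ha]
      have h2 : outcome (a :: t) R = outcome t R := by
        simp [outcome, List.filter_cons, haR]
      rw [h1, h2]
      exact ih (fun v hv => h v (by rw [h1]; exact hv))

lemma key_bound (N K : ℕ) (hKN : K ≤ N)
    (T : ℕ) (𝒯 : Fin T → List (Fin N)) (hfeas : Feasible N K 𝒯) : K ≤ T := by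
  classical
  by_contra hT
  push_neg at hT
  have hN : K ≤ (Finset.univ : Finset (Fin N)).card := by simpa using hKN
  obtain ⟨S, -, hScard⟩ := Finset.exists_subset_card_eq hN
  set R := S.filter (fun v => ∃ i, outcome (𝒯 i) S = some v) with hR
  have hRS : R ⊆ S := Finset.filter_subset _ _
  have hout : ∀ i, outcome (𝒯 i) R = outcome (𝒯 i) S := by
    intro i
    apply outcome_eq_of_subset _ _ _ hRS
    intro v hv
    exact Finset.mem_filter.mpr ⟨mem_of_outcome_some hv, ⟨i, hv⟩⟩
  have hcard : R.card ≤ T := by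
    have hsub : R.image some ⊆ Finset.univ.image (fun i : Fin T => outcome (𝒯 i) S) := by
      intro o ho
      simp only [Finset.mem_image] at ho ⊢
      obtain ⟨v, hvR, rfl⟩ := ho
      obtain ⟨i, hi⟩ := (Finset.mem_filter.mp hvR).2
      exact ⟨i, Finset.mem_univ i, hi⟩
    calc R.card = (R.image some).card :=
          (Finset.card_image_of_injective _ (Option.some_injective _)).symm
      _ ≤ _ := Finset.card_le_card hsub
      _ ≤ (Finset.univ : Finset (Fin T)).card := Finset.card_image_le
      _ = T := Finset.card_univ.trans (Fintype.card_fin T)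
  have hRmem : R ∈ {S : Finset (Fin N) | S.card ≤ K} := le_trans hcard (le_of_lt hT)
  have hSmem : S ∈ {S : Finset (Fin N) | S.card ≤ K} := le_of_eq hScard
  have : R = S := hfeas hRmem hSmem (funext hout)
  rw [this, hScard] at hcard
  exact absurd hT (not_lt.mpr hcard)

lemma trivial_feasible (N K : ℕ) :
    ∃ 𝒯 : Fin N → List (Fin N), (∀ i, (𝒯 i).Nodup) ∧ Feasible N K 𝒯 := by
  refine ⟨fun i => [i], fun i => List.nodup_singleton i, ?_⟩
  intro S₁ h₁ S₂ h₂ heq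
  ext v
  have := congrFun heq v
  simp only [outcome, List.filter_cons, List.filter_nil] at this
  by_cases h1 : v ∈ S₁ <;> by_cases h2 : v ∈ S₂ <;> simp [h1, h2] at this ⊢

theorem stmt19 (N K : ℕ) (hK : 1 ≤ K) (hKN : K ≤ N) :
    (∀ (T : ℕ) (𝒯 : Fin T → List (Fin N)),
        (∀ i, (𝒯 i).Nodup) → Feasible N K 𝒯 → K ≤ T) ∧
    K ≤ TNK N K := by
  constructor
  · intro T 𝒯 _ hfeas
    exact key_bound N K hKN T 𝒯 hfeas
  · apply le_csInf ⟨N, trivial_feasible N K⟩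
    rintro T ⟨𝒯, -, hfeas⟩
    exact key_bound N K hKN T 𝒯 hfeas
end
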